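/- arXiv:0911.5126 — 8 statements merged into one kernel-verified Lean document; each statement's English description precedes it below -/
import Mathlib

section
/- Let G be a σ-compact locally compact abelian group and X, Y closed subgroups. Then the addition map X × Y → G, (x,y) ↦ x + y, is an open map onto its image X + Y if and only if X + Y is a closed subgroup of G. -/
open Pointwise

/-- A subgroup having a compact relative neighborhood of `0` is closed
(in a Hausdorff topological group). -/
lemma aux_isClosed_of_compact_nhd {G : Type*} [AddCommGroup G] [TopologicalSpace G]
    [IsTopologicalAddGroup G] [T2Space G] (S : AddSubgroup G) (K : Set G) (hK : IsCompact K)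
    (hKS : K ⊆ S) (V : Set G) (hV : IsOpen V) (h0 : (0 : G) ∈ V)
    (hVS : V ∩ (S : Set G) ⊆ K) : IsClosed (S : Set G) := by
  rw [← closure_subset_iff_isClosed]
  intro g hg
  obtain ⟨W, W_open, W0, hW⟩ := exists_open_nhds_zero_add_subset (hV.mem_nhds h0)
  set W1 : Set G := W ∩ (-W) with hW1
  have hW1open : IsOpen W1 := W_open.inter W_open.neg
  have hW10 : (0 : G) ∈ W1 := ⟨W0, by simpa using W0⟩
  -- the open neighborhood `g + W1` of `g`
  set U0 : Set G := (g +ᵥ W1) with hU0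
  have hU0open : IsOpen U0 := hW1open.vadd g
  have hgU0 : g ∈ U0 := ⟨0, hW10, by simp⟩
  -- pick `s ∈ S ∩ U0`
  obtain ⟨s, hsU0, hsS⟩ := mem_closure_iff.1 hg U0 hU0open hgU0
  -- every element of `S ∩ U0` lies in `s + K`
  have key : (S : Set G) ∩ U0 ⊆ (s +ᵥ K) := by
    rintro x ⟨hxS, hxU0⟩
    obtain ⟨w, hw, rfl⟩ := hxU0
    obtain ⟨w', hw', hsw'⟩ := hsU0
    refine ⟨g + w - s, ?_, by simp only [vadd_eq_add]; abel⟩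
    apply hVS
    constructor
    · have : g + w - s = w + (-w') := by
        rw [← hsw']; simp only [vadd_eq_add]; abel
      rw [this]
      exact hW ⟨w, hw.1, -w', hw'.2, rfl⟩
    · have hs' : s ∈ S := hsS
      exact S.sub_mem hxS hs'
  -- `g` is in the closure of `S ∩ U0`, which is inside the closed set `s + K`
  have hgcl : g ∈ closure ((S : Set G) ∩ U0) := by
    rw [mem_closure_iff]
    intro O hO hgO
    obtain ⟨x, hx1, hx2⟩ := mem_closure_iff.1 hg (O ∩ U0) (hO.inter hU0open) ⟨hgO, hgU0⟩
    exact ⟨x, hx1.1, hx2, hx1.2⟩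
  have hclosed : IsClosed (s +ᵥ K) := (hK.vadd s).isClosed
  have : g ∈ (s +ᵥ K) := hclosed.closure_subset ((closure_mono key) hgcl)
  obtain ⟨k, hk, rfl⟩ := this
  exact S.add_mem hsS (hKS hk)

/-- For a σ-compact locally compact Hausdorff abelian group `G` and closed subgroups
`X, Y`, the addition map `X × Y → G` is open onto its image `X + Y` if and only if
`X + Y` is closed. -/
theorem stmt5 {G : Type*} [AddCommGroup G] [TopologicalSpace G] [IsTopologicalAddGroup G]
    [T2Space G] [LocallyCompactSpace G] [SigmaCompactSpace G]
    (X Y : AddSubgroup G) (hX : IsClosed (X : Set G)) (hY : IsClosed (Y : Set G)) :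
    (∀ U : Set (X × Y), IsOpen U → ∃ V : Set G, IsOpen V ∧
        (fun p : X × Y => (p.1 : G) + (p.2 : G)) '' U = V ∩ ((X : Set G) + (Y : Set G)))
    ↔ IsClosed ((X : Set G) + (Y : Set G)) := by
  have hsum : ((X : Set G) + (Y : Set G)) = ((X ⊔ Y : AddSubgroup G) : Set G) := by
    ext g
    simp only [Set.mem_add, SetLike.mem_coe, AddSubgroup.mem_sup]
  have hXlc : LocallyCompactSpace X := hX.locallyCompactSpace
  have hYlc : LocallyCompactSpace Y := hY.locallyCompactSpace
  have hcont : Continuous (fun p : X × Y => (p.1 : G) + (p.2 : G)) :=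
    ((continuous_subtype_val.comp continuous_fst).add
      (continuous_subtype_val.comp continuous_snd))
  constructor
  · -- open onto image → closed
    intro h
    obtain ⟨K, hKc, hKmem⟩ := exists_compact_mem_nhds ((0, 0) : X × Y)
    obtain ⟨V, hVopen, hVeq⟩ := h (interior K) isOpen_interior
    rw [hsum]
    apply aux_isClosed_of_compact_nhd (X ⊔ Y)
      ((fun p : X × Y => (p.1 : G) + (p.2 : G)) '' K) (hKc.image hcont)
    · rintro g ⟨⟨x, y⟩, _, rfl⟩
      exact AddSubgroup.add_mem_sup x.2 y.2
    · exact hVopen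
    · have h0 : ((0, 0) : X × Y) ∈ interior K := mem_interior_iff_mem_nhds.2 hKmem
      have : (0 : G) ∈ (fun p : X × Y => (p.1 : G) + (p.2 : G)) '' interior K :=
        ⟨(0, 0), h0, by simp⟩
      rw [hVeq] at this
      exact this.1
    · rw [← hsum, ← hVeq]
      exact Set.image_mono interior_subset
  · -- closed → open onto image
    intro hS
    rw [hsum] at hS
    set S : AddSubgroup G := X ⊔ Y with hSdef
    have hXsc : SigmaCompactSpace X := hX.sigmaCompactSpace
    have hYsc : SigmaCompactSpace Y := hY.sigmaCompactSpace
    have hSlc : LocallyCompactSpace S := hS.locallyCompactSpace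
    -- the addition map as a morphism onto S
    let φ : (X × Y) →+ S :=
      { toFun := fun p => ⟨(p.1 : G) + (p.2 : G), AddSubgroup.add_mem_sup p.1.2 p.2.2⟩
        map_zero' := by ext; simp
        map_add' := by intro p q; ext; simp; abel }
    have hφcont : Continuous φ := hcont.subtype_mk _
    have hφsurj : Function.Surjective φ := by
      rintro ⟨g, hg⟩
      obtain ⟨x, hx, y, hy, rfl⟩ := AddSubgroup.mem_sup.1 hg
      exact ⟨(⟨x, hx⟩, ⟨y, hy⟩), rfl⟩
    have hφopen : IsOpenMap φ := AddMonoidHom.isOpenMap_of_sigmaCompact φ hφsurj hφcont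
    intro U hU
    have hopen : IsOpen (φ '' U) := hφopen U hU
    obtain ⟨V, hVopen, hVeq⟩ := isOpen_induced_iff.1 hopen
    refine ⟨V, hVopen, ?_⟩
    have himg : (fun p : X × Y => (p.1 : G) + (p.2 : G)) '' U =
        Subtype.val '' (φ '' U) := by
      rw [← Set.image_comp]; rfl
    rw [himg, ← hVeq, Set.image_preimage_eq_inter_range, Subtype.range_val, hsum]
end

section
/- Let G be a locally compact abelian group and let X, Y be closed subgroups which are compatible (the natural map X ⊕ Y → X + Y, (x,y) ↦ x + y, is open onto the closed subgroup X + Y). Then the pair of closed subgroups X² = X ⊕ X and Y^(2) = {(y,y) : y ∈ Y} of G² = G ⊕ G is compatible. -/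
open Pointwise

/-- Two closed subgroups `X, Y` of a locally compact abelian group are *compatible* if
`X + Y` is closed and the addition map `X × Y → X + Y` is an open map onto its image. -/
def AddCompatible {G : Type*} [AddCommGroup G] [TopologicalSpace G]
    (X Y : AddSubgroup G) : Prop :=
  IsClosed ((X : Set G) + (Y : Set G)) ∧
  ∀ U : Set (X × Y), IsOpen U → ∃ V : Set G, IsOpen V ∧
    (fun p : X × Y => (p.1 : G) + (p.2 : G)) '' U = V ∩ ((X : Set G) + (Y : Set G))

/-- If `X, Y` are compatible closed subgroups of `G`, then `X² = X ⊕ X` and the diagonal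
`Y⁽²⁾ = {(y,y) : y ∈ Y}` form a compatible pair of closed subgroups of `G ⊕ G`. -/
theorem stmt6 {G : Type*} [AddCommGroup G] [TopologicalSpace G] [IsTopologicalAddGroup G]
    [LocallyCompactSpace G] [T2Space G]
    (X Y : AddSubgroup G) (hX : IsClosed (X : Set G)) (hY : IsClosed (Y : Set G))
    (h : AddCompatible X Y) :
    AddCompatible (X.prod X)
      (AddSubgroup.map ((AddMonoidHom.id G).prod (AddMonoidHom.id G)) Y) := by
  obtain ⟨hS, hOpen⟩ := h
  set Yd := AddSubgroup.map ((AddMonoidHom.id G).prod (AddMonoidHom.id G)) Y with hYddef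
  set S : Set G := (X : Set G) + (Y : Set G) with hSdef
  -- characterization of the sum set
  have hT : ((X.prod X : Set (G × G)) + (Yd : Set (G × G)))
      = {p : G × G | p.1 ∈ S ∧ p.1 - p.2 ∈ X} := by
    ext p
    constructor
    · rintro ⟨q, hq, r, ⟨y, hy, rfl⟩, rfl⟩
      refine ⟨⟨q.1, hq.1, y, hy, rfl⟩, ?_⟩
      have : q.1 + y - (q.2 + y) = q.1 - q.2 := by abel
      simpa [this] using X.sub_mem hq.1 hq.2
    · obtain ⟨a, b⟩ := p
      rintro ⟨⟨x, hx, y, hy, hxy⟩, hd⟩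
      refine ⟨(x, x - (a - b)), ⟨hx, X.sub_mem hx hd⟩, (y, y), ⟨y, hy, rfl⟩, ?_⟩
      simp only [Prod.mk_add_mk, Prod.mk.injEq]
      have hxy' : x + y = a := hxy
      refine ⟨hxy', ?_⟩
      rw [← hxy']
      abel
  constructor
  · rw [hT]
    have : {p : G × G | p.1 ∈ S ∧ p.1 - p.2 ∈ X}
        = (fun p : G × G => (p.1, p.1 - p.2)) ⁻¹' (S ×ˢ (X : Set G)) := rfl
    rw [this]
    exact (hS.prod hX).preimage (by fun_prop)
  · intro U hU
    have key : ∀ p ∈ U, ∃ V : Set (G × G), IsOpen V ∧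
        ((p.1 : G × G) + (p.2 : G × G)) ∈ V ∧
        V ∩ {q : G × G | q.1 ∈ S ∧ q.1 - q.2 ∈ X} ⊆
          (fun p : ↥(X.prod X) × ↥Yd => (p.1 : G × G) + (p.2 : G × G)) '' U := by
      intro p hp
      obtain ⟨hx1, hx2⟩ := AddSubgroup.mem_prod.mp p.1.2
      obtain ⟨y0, hy0, hyeq⟩ := p.2.2
      -- the reparametrizing map
      set θ : ↥X × ↥Y × ↥X → ↥(X.prod X) × ↥Yd := fun q =>
        (⟨((q.1 : G), (q.1 : G) + (q.2.2 : G)),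
          AddSubgroup.mem_prod.mpr ⟨q.1.2, X.add_mem q.1.2 q.2.2.2⟩⟩,
         ⟨((q.2.1 : G), (q.2.1 : G)), ⟨(q.2.1 : G), q.2.1.2, rfl⟩⟩) with hθdef
      have hθcont : Continuous θ := by
        apply Continuous.prodMk
        · exact (((continuous_subtype_val.comp continuous_fst)).prodMk
            ((continuous_subtype_val.comp continuous_fst).add
              (continuous_subtype_val.comp (continuous_snd.comp continuous_snd)))).subtype_mk _
        · exact ((continuous_subtype_val.comp (continuous_fst.comp continuous_snd)).prodMk
            (continuous_subtype_val.comp (continuous_fst.comp continuous_snd))).subtype_mk _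
      set pt : ↥X × ↥Y × ↥X :=
        (⟨(p.1 : G × G).1, hx1⟩, ⟨y0, hy0⟩, ⟨(p.1 : G × G).2 - (p.1 : G × G).1,
          X.sub_mem hx2 hx1⟩) with hptdef
      have hpt : θ pt = p := by
        refine Prod.ext (Subtype.ext ?_) (Subtype.ext ?_)
        · refine Prod.ext rfl ?_
          show (p.1 : G × G).1 + ((p.1 : G × G).2 - (p.1 : G × G).1) = (p.1 : G × G).2
          abel
        · exact hyeq
      have hptU : pt ∈ θ ⁻¹' U := by
        show θ pt ∈ U
        rw [hpt]; exact hp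
      obtain ⟨u, w, hu, hw, hu1, hw1, huw⟩ :=
        isOpen_prod_iff.mp (hU.preimage hθcont) pt.1 pt.2 hptU
      obtain ⟨v1, v2, hv1, hv2, hm1, hm2, hv12⟩ := isOpen_prod_iff.mp hw pt.2.1 pt.2.2 hw1
      obtain ⟨A, hAopen, hAeq⟩ := isOpen_induced_iff.mp hu
      obtain ⟨B, hBopen, hBeq⟩ := isOpen_induced_iff.mp hv1
      obtain ⟨C, hCopen, hCeq⟩ := isOpen_induced_iff.mp hv2
      -- apply compatibility of X, Y
      set U₁ : Set (↥X × ↥Y) := {q | (q.1 : G) ∈ A ∧ (q.2 : G) ∈ B} with hU₁def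
      have hU₁ : IsOpen U₁ :=
        (hAopen.preimage (continuous_subtype_val.comp continuous_fst)).inter
          (hBopen.preimage (continuous_subtype_val.comp continuous_snd))
      obtain ⟨V₁, hV₁, hV₁eq⟩ := hOpen U₁ hU₁
      refine ⟨{ab : G × G | ab.1 ∈ V₁ ∧ ab.2 - ab.1 ∈ C}, ?_, ?_, ?_⟩
      · exact (hV₁.preimage continuous_fst).inter
          (hCopen.preimage (continuous_snd.sub continuous_fst))
      · constructor
        · have h1 : ((p.1 : G × G) + (p.2 : G × G)).1 = (p.1 : G × G).1 + y0 := by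
            rw [← hyeq]; rfl
          rw [h1]
          have hmem : (⟨(p.1 : G × G).1, hx1⟩, (⟨y0, hy0⟩ : ↥Y)) ∈ U₁ := by
            constructor
            · show ((pt.1 : ↥X) : G) ∈ A
              rw [← hAeq] at hu1; exact hu1
            · show ((pt.2.1 : ↥Y) : G) ∈ B
              rw [← hBeq] at hm1; exact hm1
          have : (p.1 : G × G).1 + y0 ∈ V₁ ∩ S := by
            rw [← hV₁eq]
            exact ⟨_, hmem, rfl⟩
          exact this.1
        · have h2 : ((p.1 : G × G) + (p.2 : G × G)).2 - ((p.1 : G × G) + (p.2 : G × G)).1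
              = (p.1 : G × G).2 - (p.1 : G × G).1 := by
            rw [← hyeq]
            show (p.1 : G × G).2 + y0 - ((p.1 : G × G).1 + y0) = _
            abel
          rw [h2]
          show ((pt.2.2 : ↥X) : G) ∈ C
          rw [← hCeq] at hm2; exact hm2
      · rintro ⟨a, b⟩ ⟨⟨haV1, habC⟩, haS, habX⟩
        have : a ∈ (fun q : ↥X × ↥Y => (q.1 : G) + (q.2 : G)) '' U₁ := by
          rw [hV₁eq]; exact ⟨haV1, haS⟩
        obtain ⟨⟨xq, yq⟩, ⟨hxqA, hyqB⟩, hsum⟩ := this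
        have htX : b - a ∈ X := by simpa [neg_sub] using X.neg_mem habX
        have hmemU : (xq, yq, (⟨b - a, htX⟩ : ↥X)) ∈ θ ⁻¹' U := by
          apply huw
          constructor
          · show xq ∈ u
            rw [← hAeq]; exact hxqA
          · apply hv12
            constructor
            · show yq ∈ v1
              rw [← hBeq]; exact hyqB
            · show (⟨b - a, htX⟩ : ↥X) ∈ v2
              rw [← hCeq]; exact habC
        refine ⟨θ (xq, yq, ⟨b - a, htX⟩), hmemU, ?_⟩
        show ((xq : G), (xq : G) + (b - a)) + ((yq : G), (yq : G)) = (a, b)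
        simp only [Prod.mk_add_mk, Prod.mk.injEq]
        have hsum' : (xq : G) + (yq : G) = a := hsum
        refine ⟨hsum', ?_⟩
        rw [← hsum']
        abel
    choose V hVopen hVmem hVsub using key
    refine ⟨⋃ p, ⋃ hp : p ∈ U, V p hp, isOpen_iUnion fun p => isOpen_iUnion fun hp => hVopen p hp, ?_⟩
    ext q
    constructor
    · rintro ⟨p, hp, rfl⟩
      exact ⟨Set.mem_iUnion₂.mpr ⟨p, hp, hVmem p hp⟩, Set.add_mem_add p.1.2 p.2.2⟩
    · rintro ⟨hq1, hq2⟩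
      obtain ⟨p, hp, hq1'⟩ := Set.mem_iUnion₂.mp hq1
      rw [hT] at hq2
      exact hVsub p hp ⟨hq1', hq2⟩
end

section
/- Let G be a locally compact abelian group and X, Y compatible closed subgroups. Then the restriction to X of the algebra of functions C_o(G/Y) (viewed as bounded uniformly continuous functions on G constant on cosets of Y and vanishing as the coset tends to infinity) equals C_o(X/(X ∩ Y)), i.e. C_G(Y)|_X = C_X(X ∩ Y). The same holds with C_o replaced by compactly supported continuous functions C_c. -/
open Pointwise
open scoped ZeroAtInfty

open Topology Filter Set

/-- Extension of functions vanishing at infinity along a closed embedding,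
via the one-point compactification. -/
theorem exists_c0_extension {A B : Type*} [TopologicalSpace A] [T2Space A]
    [TopologicalSpace B] [T2Space B] [LocallyCompactSpace B]
    {f : A → B} (hf : IsClosedEmbedding f) (ψ : C₀(A, ℂ)) :
    ∃ φ : C₀(B, ℂ), ∀ a, φ (f a) = ψ a := by
  set e : OnePoint A → OnePoint B := OnePoint.map f with he
  have hec : Continuous e := OnePoint.continuous_map hf.continuous (by
    rw [Filter.coclosedCompact_eq_cocompact, Filter.coclosedCompact_eq_cocompact]
    exact hf.tendsto_cocompact)
  have hce : IsClosedEmbedding e := hec.isClosedEmbedding (Option.map_injective hf.injective)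
  have hΨt : Tendsto ψ (coclosedCompact A) (𝓝 0) := by
    rw [Filter.coclosedCompact_eq_cocompact]; exact zero_at_infty ψ
  set Ψ : C(OnePoint A, ℂ) := OnePoint.continuousMapMk ψ.toContinuousMap 0 hΨt with hΨ
  obtain ⟨Φ, hΦ⟩ := Ψ.exists_extension hce
  have hΦe : ∀ z, Φ (e z) = Ψ z := fun z => by
    have := congrArg (fun (g : C(OnePoint A, ℂ)) => g z) hΦ
    simpa using this
  have hΦinf : Φ (OnePoint.infty) = 0 := hΦe OnePoint.infty
  have hcoe : Tendsto ((↑) : B → OnePoint B) (cocompact B) (𝓝 OnePoint.infty) := by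
    rw [← Filter.coclosedCompact_eq_cocompact, ← OnePoint.comap_coe_nhds_infty]
    exact tendsto_comap
  refine ⟨⟨⟨fun b => Φ b, Φ.continuous.comp OnePoint.continuous_coe⟩, ?_⟩, ?_⟩
  · have : Tendsto (fun b : B => Φ b) (cocompact B) (𝓝 (Φ OnePoint.infty)) :=
      (Φ.continuous.tendsto _).comp hcoe
    rwa [hΦinf] at this
  · intro a
    have h1 : ((f a : B) : OnePoint B) = e (a : OnePoint A) := rfl
    have h2 := hΦe (a : OnePoint A)
    simp only [ZeroAtInftyContinuousMap.coe_mk, ContinuousMap.coe_mk]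
    rw [h1, h2]
    rfl

/-- Extension of compactly supported continuous functions along a closed embedding. -/
theorem exists_cc_extension {A B : Type*} [TopologicalSpace A] [T2Space A]
    [TopologicalSpace B] [T2Space B] [LocallyCompactSpace B] [RegularSpace B]
    {f : A → B} (hf : IsClosedEmbedding f) (ψ : C(A, ℂ)) (hψ : HasCompactSupport ⇑ψ) :
    ∃ φ : C(B, ℂ), HasCompactSupport ⇑φ ∧ ∀ a, φ (f a) = ψ a := by
  obtain ⟨φ₀, hφ₀⟩ := exists_c0_extension hf ⟨ψ, hψ.is_zero_at_infty⟩
  have hK : IsCompact (f '' tsupport ⇑ψ) := hψ.image hf.continuous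
  obtain ⟨χ, hχ1, -, hχc, -⟩ :=
    exists_continuous_one_zero_of_isCompact hK isClosed_empty (Set.disjoint_empty _)
  refine ⟨⟨fun b => (χ b : ℂ) * φ₀ b,
      (Complex.continuous_ofReal.comp χ.continuous).mul φ₀.continuous⟩, ?_, ?_⟩
  · refine hχc.mono ?_
    intro b hb
    simp only [Function.mem_support, ContinuousMap.coe_mk] at hb ⊢
    intro hχb
    exact hb (by simp [hχb])
  · intro a
    simp only [ContinuousMap.coe_mk]
    rw [hφ₀ a]
    by_cases ha : a ∈ tsupport ⇑ψ
    · rw [hχ1 (Set.mem_image_of_mem f ha)]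
      simp only [Pi.one_apply, Complex.ofReal_one, one_mul]
      rfl
    · have h0 : ψ a = 0 := image_eq_zero_of_notMem_tsupport ha
      have h0' : ({ toContinuousMap := ψ, zero_at_infty' := hψ.is_zero_at_infty } : C₀(A, ℂ)) a = 0 := h0
      rw [h0', mul_zero, h0]

/-- For compatible closed subgroups `X, Y` of an LCA group `G`, the restriction to `X`
of `C_G(Y)` (functions `φ ∘ π_Y` with `φ ∈ C₀(G/Y)`) equals `C_X(X ∩ Y)`
(functions `ψ ∘ π_{X∩Y}` with `ψ ∈ C₀(X/(X∩Y))`), and the same holds for compactly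
supported continuous functions. -/
theorem stmt8 {G : Type*} [AddCommGroup G] [TopologicalSpace G] [IsTopologicalAddGroup G]
    [LocallyCompactSpace G] [T2Space G]
    (X Y : AddSubgroup G) (hX : IsClosed (X : Set G)) (hY : IsClosed (Y : Set G))
    (h : AddCompatible X Y) :
    ({g : X → ℂ | ∃ φ : C₀(G ⧸ Y, ℂ), g = fun x : X => φ (QuotientAddGroup.mk (x : G))} =
      {g : X → ℂ | ∃ ψ : C₀(X ⧸ ((X ⊓ Y).addSubgroupOf X), ℂ),
        g = fun x : X => ψ (QuotientAddGroup.mk x)}) ∧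
    ({g : X → ℂ | ∃ φ : C(G ⧸ Y, ℂ), HasCompactSupport (⇑φ) ∧
        g = fun x : X => φ (QuotientAddGroup.mk (x : G))} =
      {g : X → ℂ | ∃ ψ : C(X ⧸ ((X ⊓ Y).addSubgroupOf X), ℂ), HasCompactSupport (⇑ψ) ∧
        g = fun x : X => ψ (QuotientAddGroup.mk x)}) := by
  classical
  set N : AddSubgroup X := (X ⊓ Y).addSubgroupOf X with hNdef
  have hle : N ≤ Y.comap X.subtype := fun x hx => by
    exact AddSubgroup.mem_comap.mpr (AddSubgroup.mem_inf.mp (AddSubgroup.mem_addSubgroupOf.mp hx)).2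
  set f : X ⧸ N → G ⧸ Y := ⇑(QuotientAddGroup.map N Y X.subtype hle) with hfdef
  have hfmk : ∀ x : X, f (QuotientAddGroup.mk x) = QuotientAddGroup.mk (x : G) :=
    fun x => rfl
  -- instances
  haveI : IsClosed (Y : Set G) := hY
  haveI : T3Space (G ⧸ Y) := inferInstance
  haveI : IsClosed (N : Set X) := by
    have h1 : IsClosed ((X ⊓ Y : AddSubgroup G) : Set G) := by
      rw [AddSubgroup.coe_inf]; exact hX.inter hY
    exact h1.preimage continuous_subtype_val
  haveI : T3Space (X ⧸ N) := inferInstance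
  -- injectivity
  have hinj : Function.Injective f := by
    intro a b
    induction a using QuotientAddGroup.induction_on with
    | H x =>
    induction b using QuotientAddGroup.induction_on with
    | H y =>
    intro hxy
    rw [hfmk, hfmk, QuotientAddGroup.eq] at hxy
    rw [QuotientAddGroup.eq]
    refine AddSubgroup.mem_addSubgroupOf.mpr (AddSubgroup.mem_inf.mpr ⟨SetLike.coe_mem _, ?_⟩)
    simpa using hxy
  -- continuity
  have hcont : Continuous f := by
    rw [(QuotientAddGroup.isQuotientMap_mk N).continuous_iff]
    exact QuotientAddGroup.continuous_mk.comp continuous_subtype_val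
  -- the range of f is closed
  have hrange_pre : QuotientAddGroup.mk ⁻¹' (Set.range f) = (X : Set G) + (Y : Set G) := by
    ext g
    constructor
    · rintro ⟨q, hq⟩
      obtain ⟨x, rfl⟩ := QuotientAddGroup.mk_surjective q
      rw [hfmk, QuotientAddGroup.eq] at hq
      exact Set.mem_add.mpr ⟨(x : G), x.2, -(x : G) + g, hq, by abel⟩
    · intro hg
      obtain ⟨a, ha, b, hb, rfl⟩ := Set.mem_add.mp hg
      refine ⟨QuotientAddGroup.mk ⟨a, ha⟩, ?_⟩
      rw [hfmk, QuotientAddGroup.eq]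
      simpa using hb
  have hrange_closed : IsClosed (Set.range f) := by
    rw [← (QuotientAddGroup.isQuotientMap_mk Y).isClosed_preimage, hrange_pre]
    exact h.1
  -- f is open onto its range
  have hopen : ∀ U : Set (X ⧸ N), IsOpen U →
      ∃ V : Set (G ⧸ Y), IsOpen V ∧ f '' U = V ∩ Set.range f := by
    intro U hU
    have hU' : IsOpen (QuotientAddGroup.mk ⁻¹' U : Set X) :=
      hU.preimage QuotientAddGroup.continuous_mk
    obtain ⟨V₀, hV₀, himg⟩ := h.2 ((QuotientAddGroup.mk ⁻¹' U) ×ˢ (Set.univ : Set Y))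
      (hU'.prod isOpen_univ)
    refine ⟨QuotientAddGroup.mk '' V₀, QuotientAddGroup.isOpenMap_coe V₀ hV₀, ?_⟩
    ext q
    constructor
    · rintro ⟨u, hu, rfl⟩
      obtain ⟨x, rfl⟩ := QuotientAddGroup.mk_surjective u
      have hmem : ((x : G) + ((0 : Y) : G)) ∈ V₀ ∩ ((X : Set G) + (Y : Set G)) := by
        rw [← himg]
        exact Set.mem_image_of_mem (fun p : X × Y => (p.1 : G) + (p.2 : G))
          (Set.mk_mem_prod hu (Set.mem_univ (0 : Y)))
      have hxV : (x : G) ∈ V₀ := by simpa using hmem.1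
      exact ⟨Set.mem_image_of_mem _ hxV, ⟨QuotientAddGroup.mk x, rfl⟩⟩
    · rintro ⟨⟨v, hv, hveq⟩, ⟨w, rfl⟩⟩
      obtain ⟨x, rfl⟩ := QuotientAddGroup.mk_surjective w
      rw [hfmk] at hveq ⊢
      have hy : -v + (x : G) ∈ Y := QuotientAddGroup.eq.mp hveq
      have hvXY : v ∈ V₀ ∩ ((X : Set G) + (Y : Set G)) := by
        refine ⟨hv, Set.mem_add.mpr ⟨(x : G), x.2, -(x : G) + v, ?_, by abel⟩⟩
        simpa using neg_mem hy
      rw [← himg] at hvXY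
      obtain ⟨⟨x', y'⟩, hmem, hsum⟩ := hvXY
      have hx'U : QuotientAddGroup.mk x' ∈ U := (Set.mem_prod.mp hmem).1
      refine ⟨QuotientAddGroup.mk x', hx'U, ?_⟩
      rw [hfmk, ← hveq, QuotientAddGroup.eq]
      rw [← hsum]
      simp
  -- f is a closed embedding
  have hfemb : IsClosedEmbedding f := by
    have hopenmap : IsOpenMap (Set.rangeFactorization f) := by
      intro U hU
      obtain ⟨V, hV, hVU⟩ := hopen U hU
      rw [isOpen_induced_iff]
      refine ⟨V, hV, ?_⟩
      ext ⟨q, hq⟩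
      constructor
      · intro hqV
        have : q ∈ f '' U := by rw [hVU]; exact ⟨hqV, hq⟩
        obtain ⟨u, hu, huq⟩ := this
        exact ⟨u, hu, Subtype.ext huq⟩
      · rintro ⟨u, hu, huq⟩
        have hfu : f u ∈ V ∩ Set.range f := by
          rw [← hVU]; exact Set.mem_image_of_mem f hu
        have hq' : f u = q := congrArg Subtype.val huq
        exact hq' ▸ hfu.1
    exact hrange_closed.isClosedEmbedding_subtypeVal.comp
      (Equiv.toHomeomorphOfContinuousOpen
        (Equiv.ofBijective (Set.rangeFactorization f)
          ⟨fun a b hab => hinj (Subtype.ext_iff.mp hab), Set.rangeFactorization_surjective⟩)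
        (Continuous.subtype_mk hcont _) hopenmap).isClosedEmbedding
  constructor
  · ext g
    simp only [Set.mem_setOf_eq]
    constructor
    · rintro ⟨φ, rfl⟩
      refine ⟨⟨⟨fun q => φ (f q), φ.continuous.comp hfemb.continuous⟩,
        (zero_at_infty φ).comp hfemb.tendsto_cocompact⟩, ?_⟩
      funext x
      exact (congrArg φ (hfmk x)).symm
    · rintro ⟨ψ, rfl⟩
      obtain ⟨φ, hφ⟩ := exists_c0_extension hfemb ψ
      refine ⟨φ, ?_⟩
      funext x
      rw [← hfmk x, hφ]
  · ext g
    simp only [Set.mem_setOf_eq]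
    constructor
    · rintro ⟨φ, hφc, rfl⟩
      refine ⟨φ.comp ⟨f, hfemb.continuous⟩, hφc.comp_isClosedEmbedding hfemb, ?_⟩
      funext x
      exact (congrArg φ (hfmk x)).symm
    · rintro ⟨ψ, hψc, rfl⟩
      obtain ⟨φ, hφc, hφ⟩ := exists_cc_extension hfemb ψ hψc
      refine ⟨φ, hφc, ?_⟩
      funext x
      rw [← hfmk x, hφ]
end

section
/- Let G be a locally compact abelian group and X, Y compatible closed subgroups. Then, inside C_b^u(G), the closed linear span of products is C_G(X) · C_G(Y) = C_G(X ∩ Y), where C_G(H) denotes the canonical copy of C_o(G/H) inside C_b^u(G). -/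
set_option linter.unusedSectionVars false

open Pointwise
open scoped ZeroAtInfty

/-- The canonical copy `C_G(H)` of `C₀(G/H)` inside the bounded uniformly continuous
functions on `G`, realized inside `BoundedContinuousFunction G ℂ`. -/
def CGpart {G : Type*} [AddCommGroup G] [TopologicalSpace G] (H : AddSubgroup G) :
    Set (BoundedContinuousFunction G ℂ) :=
  {f | ∃ φ : C₀(G ⧸ H, ℂ), ∀ g : G, f g = φ (QuotientAddGroup.mk g)}

namespace StmtNine

open Filter Set Topology OnePoint

/-! ### One-point compactification extension -/

/-- Extension to the one-point compactification by `0`. -/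
noncomputable def extOP {Z : Type*} [TopologicalSpace Z] [R1Space Z] (χ : C₀(Z, ℂ)) :
    C(OnePoint Z, ℂ) :=
  OnePoint.continuousMapMk χ.toContinuousMap 0
    (by rw [Filter.coclosedCompact_eq_cocompact]; exact χ.zero_at_infty')

section ExtOP

variable {Z : Type*} [TopologicalSpace Z] [R1Space Z]

@[simp] lemma extOP_coe (χ : C₀(Z, ℂ)) (z : Z) : extOP χ (z : OnePoint Z) = χ z := rfl
@[simp] lemma extOP_infty (χ : C₀(Z, ℂ)) : extOP χ (∞ : OnePoint Z) = 0 := rfl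

lemma extOP_identity_mul (χ χ' : C₀(Z, ℂ)) (c c' : ℂ) :
    (extOP χ + c • 1) * (extOP χ' + c' • 1) =
      extOP (χ * χ' + c' • χ + c • χ') + (c * c') • 1 := by
  ext p
  induction p using OnePoint.rec with
  | infty => simp
  | coe z => simp; ring

lemma extOP_identity_add (χ χ' : C₀(Z, ℂ)) (c c' : ℂ) :
    (extOP χ + c • 1) + (extOP χ' + c' • 1) = extOP (χ + χ') + (c + c') • 1 := by
  ext p
  induction p using OnePoint.rec with
  | infty => simp
  | coe z => simp; ring

lemma extOP_identity_star (χ : C₀(Z, ℂ)) (c : ℂ) :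
    star (extOP χ + c • 1) = extOP (star χ) + (star c) • 1 := by
  ext p
  induction p using OnePoint.rec with
  | infty => simp
  | coe z => simp

lemma extOP_identity_one : (1 : C(OnePoint Z, ℂ)) = extOP 0 + (1 : ℂ) • 1 := by
  ext p
  induction p using OnePoint.rec with
  | infty => simp
  | coe z => simp

lemma extOP_identity_algebraMap (c : ℂ) :
    algebraMap ℂ C(OnePoint Z, ℂ) c = extOP 0 + c • 1 := by
  ext p
  induction p using OnePoint.rec with
  | infty => simp [Algebra.algebraMap_eq_smul_one]
  | coe z => simp [Algebra.algebraMap_eq_smul_one]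

/-- Urysohn-type lemma for `C₀` functions. -/
lemma exists_C0_one_zero [RegularSpace Z] [LocallyCompactSpace Z]
    {u : Z} {t : Set Z} (ht : IsClosed t) (hu : u ∉ t) :
    ∃ φ : C₀(Z, ℂ), φ u = 1 ∧ ∀ v ∈ t, φ v = 0 := by
  obtain ⟨f, hf1, hf0, hfc, _⟩ := exists_continuous_one_zero_of_isCompact isCompact_singleton ht
    (Set.disjoint_singleton_left.2 hu)
  refine ⟨⟨⟨fun z => (f z : ℂ), Complex.continuous_ofReal.comp f.continuous⟩, ?_⟩, ?_, ?_⟩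
  · have := (Complex.continuous_ofReal.tendsto 0).comp hfc.is_zero_at_infty
    simpa [Function.comp_def] using this
  · have := hf1 (Set.mem_singleton u)
    simp only [Pi.one_apply] at this
    simp [this]
  · intro v hv
    have := hf0 hv
    simp only [Pi.zero_apply] at this
    simp [this]

end ExtOP

/-! ### Pullback machinery -/

variable {G : Type*} [AddCommGroup G] [TopologicalSpace G] [IsTopologicalAddGroup G]

/-- Pullback of a `C₀` function on the quotient to a bounded continuous function on `G`. -/
noncomputable def pbk (H : AddSubgroup G) (φ : C₀(G ⧸ H, ℂ)) : BoundedContinuousFunction G ℂ :=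
  φ.toBCF.compContinuous ⟨QuotientAddGroup.mk, continuous_quot_mk⟩

@[simp] lemma pbk_apply (H : AddSubgroup G) (φ : C₀(G ⧸ H, ℂ)) (g : G) :
    pbk H φ g = φ (QuotientAddGroup.mk g) := rfl

lemma pbk_mem_CGpart (H : AddSubgroup G) (φ : C₀(G ⧸ H, ℂ)) : pbk H φ ∈ CGpart H :=
  ⟨φ, fun _ => rfl⟩

lemma CGpart_eq_range (H : AddSubgroup G) : CGpart H = Set.range (pbk H) := by
  ext f
  constructor
  · rintro ⟨φ, hφ⟩
    exact ⟨φ, by ext g; exact (hφ g).symm⟩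
  · rintro ⟨φ, rfl⟩
    exact ⟨φ, fun _ => rfl⟩

lemma pbk_mul (H : AddSubgroup G) (φ ψ : C₀(G ⧸ H, ℂ)) :
    pbk H (φ * ψ) = pbk H φ * pbk H ψ := by ext g; simp

lemma pbk_add (H : AddSubgroup G) (φ ψ : C₀(G ⧸ H, ℂ)) :
    pbk H (φ + ψ) = pbk H φ + pbk H ψ := by ext g; simp

lemma pbk_smul (H : AddSubgroup G) (c : ℂ) (φ : C₀(G ⧸ H, ℂ)) :
    pbk H (c • φ) = c • pbk H φ := by ext g; simp

lemma pbk_star (H : AddSubgroup G) (φ : C₀(G ⧸ H, ℂ)) :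
    pbk H (star φ) = star (pbk H φ) := by ext g; simp

lemma pbk_zero (H : AddSubgroup G) : pbk H (0 : C₀(G ⧸ H, ℂ)) = 0 := by ext g; simp

lemma pbk_isometry (H : AddSubgroup G) : Isometry (pbk H) :=
  Isometry.of_dist_eq fun φ ψ => by
    rw [← ZeroAtInftyContinuousMap.dist_toBCF_eq_dist]
    refine le_antisymm ?_ ?_
    · exact (BoundedContinuousFunction.dist_le dist_nonneg).2 fun g =>
        BoundedContinuousFunction.dist_coe_le_dist (f := φ.toBCF) (g := ψ.toBCF) _
    · refine (BoundedContinuousFunction.dist_le dist_nonneg).2 fun q => ?_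
      obtain ⟨g, rfl⟩ := QuotientAddGroup.mk_surjective q
      exact BoundedContinuousFunction.dist_coe_le_dist (f := pbk H φ) (g := pbk H ψ) g

set_option synthInstance.maxHeartbeats 400000 in
lemma isClosed_CGpart (H : AddSubgroup G) : IsClosed (CGpart H) := by
  rw [CGpart_eq_range]
  exact ((pbk_isometry H).isUniformInducing.isComplete_range).isClosed

/-! ### Compactness lemmas -/

/-- A compact set in the quotient is covered by the image of a compact set. -/
lemma exists_compact_image [LocallyCompactSpace G] (H : AddSubgroup G)
    {K : Set (G ⧸ H)} (hK : IsCompact K) :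
    ∃ C : Set G, IsCompact C ∧ K ⊆ QuotientAddGroup.mk '' C := by
  have h1 : ∀ q : G ⧸ H, ∃ C : Set G, IsCompact C ∧ q ∈ QuotientAddGroup.mk '' interior C := by
    intro q
    obtain ⟨g, rfl⟩ := QuotientAddGroup.mk_surjective q
    obtain ⟨C, hC, hCg⟩ := exists_compact_mem_nhds g
    exact ⟨C, hC, ⟨g, mem_interior_iff_mem_nhds.2 hCg, rfl⟩⟩
  choose C hC hq using h1
  obtain ⟨t, ht⟩ := hK.elim_finite_subcover (fun q => QuotientAddGroup.mk '' interior (C q))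
    (fun q => QuotientAddGroup.isOpenMap_coe _ isOpen_interior)
    (fun x hx => mem_iUnion.2 ⟨x, hq x⟩)
  refine ⟨⋃ q ∈ t, C q, t.isCompact_biUnion (fun q _ => hC q), fun x hx => ?_⟩
  obtain ⟨q, hqt, hxq⟩ := mem_iUnion₂.1 (ht hx)
  obtain ⟨g, hg, rfl⟩ := hxq
  exact ⟨g, mem_biUnion hqt (interior_subset hg), rfl⟩

/-- Compact subsets of `X + Y` lie in a sum of compact pieces, by compatibility. -/
lemma compat_sum [LocallyCompactSpace G] [T2Space G] (X Y : AddSubgroup G)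
    (hX : IsClosed (X : Set G)) (hY : IsClosed (Y : Set G)) (h : AddCompatible X Y)
    {K : Set G} (hK : IsCompact K) (hKs : K ⊆ (X : Set G) + (Y : Set G)) :
    ∃ A B : Set G, IsCompact A ∧ IsCompact B ∧ A ⊆ (X : Set G) ∧ B ⊆ (Y : Set G) ∧
      K ⊆ A + B := by
  haveI : LocallyCompactSpace X := hX.locallyCompactSpace
  haveI : LocallyCompactSpace Y := hY.locallyCompactSpace
  have h1 : ∀ s ∈ K, ∃ (N : Set (X × Y)) (V : Set G), IsCompact N ∧ IsOpen V ∧ s ∈ V ∧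
      V ∩ ((X : Set G) + (Y : Set G)) ⊆ (fun p : X × Y => (p.1 : G) + (p.2 : G)) '' N := by
    intro s hs
    obtain ⟨x, hx, y, hy, hxy⟩ := hKs hs
    set p : X × Y := (⟨x, hx⟩, ⟨y, hy⟩) with hp
    obtain ⟨N, hN, hNp⟩ := exists_compact_mem_nhds p
    obtain ⟨V, hV, himg⟩ := h.2 (interior N) isOpen_interior
    refine ⟨N, V, hN, hV, ?_, ?_⟩
    · have : s ∈ (fun p : X × Y => (p.1 : G) + (p.2 : G)) '' interior N :=
        ⟨p, mem_interior_iff_mem_nhds.2 hNp, hxy⟩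
      rw [himg] at this
      exact this.1
    · intro v hv
      rw [← himg] at hv
      exact image_mono interior_subset hv
  choose! N V hN hV hsV hsub using h1
  obtain ⟨t, ht⟩ := hK.elim_finite_subcover_image (fun s hs => hV s hs)
    (fun s hs => mem_biUnion hs (hsV s hs))
  obtain ⟨htK, htfin, htcov⟩ := ht
  set N' : Set (X × Y) := ⋃ s ∈ t, N s with hN'
  have hN'c : IsCompact N' := htfin.isCompact_biUnion (fun s hs => hN s (htK hs))
  refine ⟨(fun p : X × Y => (p.1 : G)) '' N', (fun p : X × Y => (p.2 : G)) '' N',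
    hN'c.image (continuous_subtype_val.comp continuous_fst),
    hN'c.image (continuous_subtype_val.comp continuous_snd),
    ?_, ?_, ?_⟩
  · rintro _ ⟨p, _, rfl⟩; exact p.1.2
  · rintro _ ⟨p, _, rfl⟩; exact p.2.2
  · intro k hk
    obtain ⟨s, hst, hks⟩ := mem_iUnion₂.1 (htcov hk)
    have : k ∈ (fun p : X × Y => (p.1 : G) + (p.2 : G)) '' N s :=
      hsub s (htK hst) ⟨hks, hKs hk⟩
    obtain ⟨p, hpN, rfl⟩ := this
    exact Set.add_mem_add ⟨p, mem_biUnion hst hpN, rfl⟩ ⟨p, mem_biUnion hst hpN, rfl⟩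

/-! ### The descent lemma -/

lemma prod_descend [LocallyCompactSpace G] [T2Space G] (X Y : AddSubgroup G)
    (hX : IsClosed (X : Set G)) (hY : IsClosed (Y : Set G)) (h : AddCompatible X Y)
    (φ : C₀(G ⧸ X, ℂ)) (ψ : C₀(G ⧸ Y, ℂ)) :
    ∃ χ : C₀(G ⧸ (X ⊓ Y), ℂ),
      ∀ g : G, φ (QuotientAddGroup.mk g) * ψ (QuotientAddGroup.mk g) =
        χ (QuotientAddGroup.mk g) := by
  classical
  set f₀ : G → ℂ := fun g => φ (QuotientAddGroup.mk g) * ψ (QuotientAddGroup.mk g) with hf₀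
  have hresp : ∀ a b : G, (QuotientAddGroup.leftRel (X ⊓ Y)) a b → f₀ a = f₀ b := by
    intro a b hab
    rw [QuotientAddGroup.leftRel_apply] at hab
    rw [AddSubgroup.mem_inf] at hab
    have hXa : (QuotientAddGroup.mk a : G ⧸ X) = QuotientAddGroup.mk b :=
      QuotientAddGroup.eq.2 hab.1
    have hYa : (QuotientAddGroup.mk a : G ⧸ Y) = QuotientAddGroup.mk b :=
      QuotientAddGroup.eq.2 hab.2
    simp only [f₀, hXa, hYa]
  set χ₀ : G ⧸ (X ⊓ Y) → ℂ := fun q => Quotient.liftOn' q f₀ hresp with hχ₀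
  have hmk : ∀ g : G, χ₀ (QuotientAddGroup.mk g) = f₀ g := fun g => rfl
  have hcont : Continuous χ₀ := by
    rw [(QuotientAddGroup.isQuotientMap_mk (X ⊓ Y)).continuous_iff]
    exact ((map_continuous φ).comp continuous_quot_mk).mul
      ((map_continuous ψ).comp continuous_quot_mk)
  have hz : Tendsto χ₀ (cocompact (G ⧸ (X ⊓ Y))) (𝓝 0) := by
    rw [hasBasis_cocompact.tendsto_iff Metric.nhds_basis_ball]
    intro ε hε
    set Mφ : ℝ := ‖φ.toBCF‖ with hMφdef
    set Mψ : ℝ := ‖ψ.toBCF‖ with hMψdef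
    have hMφ0 : (0:ℝ) ≤ Mφ := norm_nonneg _
    have hMψ0 : (0:ℝ) ≤ Mψ := norm_nonneg _
    have hMφ : (0:ℝ) < Mφ + 1 := by linarith
    have hMψ : (0:ℝ) < Mψ + 1 := by linarith
    set δ₁ : ℝ := ε / (Mψ + 1) with hδ₁def
    set δ₂ : ℝ := ε / (Mφ + 1) with hδ₂def
    have hδ₁ : 0 < δ₁ := div_pos hε hMψ
    have hδ₂ : 0 < δ₂ := div_pos hε hMφ
    obtain ⟨K₁, hK₁c, hK₁⟩ :=
      mem_cocompact.1 (φ.zero_at_infty' (Metric.ball_mem_nhds (0:ℂ) hδ₁))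
    obtain ⟨K₂, hK₂c, hK₂⟩ :=
      mem_cocompact.1 (ψ.zero_at_infty' (Metric.ball_mem_nhds (0:ℂ) hδ₂))
    obtain ⟨C₁, hC₁, hKC₁⟩ := exists_compact_image X hK₁c
    obtain ⟨C₂, hC₂, hKC₂⟩ := exists_compact_image Y hK₂c
    obtain ⟨A, B, hA, hB, hAX, hBY, hABK⟩ := compat_sum X Y hX hY h
      (((by rw [sub_eq_add_neg]; exact hC₂.add hC₁.neg : IsCompact (C₂ - C₁))).inter_right h.1)
      inter_subset_right
    refine ⟨QuotientAddGroup.mk '' (C₁ + A), (hC₁.add hA).image continuous_quot_mk, ?_⟩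
    intro q hq
    obtain ⟨g, rfl⟩ := QuotientAddGroup.mk_surjective q
    rw [Metric.mem_ball, dist_zero_right, hmk g, norm_mul]
    have hφle : ‖φ (QuotientAddGroup.mk g)‖ ≤ Mφ := φ.toBCF.norm_coe_le_norm _
    have hψle : ‖ψ (QuotientAddGroup.mk g)‖ ≤ Mψ := ψ.toBCF.norm_coe_le_norm _
    by_cases h₁ : (QuotientAddGroup.mk g : G ⧸ X) ∈ K₁
    · by_cases h₂ : (QuotientAddGroup.mk g : G ⧸ Y) ∈ K₂
      · exfalso
        apply hq
        obtain ⟨c₁, hc₁, hc₁eq⟩ := hKC₁ h₁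
        obtain ⟨c₂, hc₂, hc₂eq⟩ := hKC₂ h₂
        have hx : -c₁ + g ∈ X := QuotientAddGroup.eq.1 hc₁eq
        have hy : -c₂ + g ∈ Y := QuotientAddGroup.eq.1 hc₂eq
        set x : G := -c₁ + g with hxdef
        set y : G := -c₂ + g with hydef
        have hd : c₂ - c₁ = x + -y := by rw [hxdef, hydef]; abel
        have hmem : c₂ - c₁ ∈ (C₂ - C₁) ∩ ((X : Set G) + (Y : Set G)) := by
          refine ⟨Set.sub_mem_sub hc₂ hc₁, ?_⟩
          rw [hd]
          exact Set.add_mem_add hx (Y.neg_mem hy)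
        obtain ⟨a, ha, b, hb, hab⟩ := hABK hmem
        have h6 : x = a + b + y := by
          have h4 : a + b = x + -y := hab.trans hd
          rw [h4]; abel
        have h5 : x - a = y + b := by rw [h6]; abel
        have hzX : x - a ∈ X := X.sub_mem hx (hAX ha)
        have hzY : x - a ∈ Y := by rw [h5]; exact Y.add_mem hy (hBY hb)
        refine ⟨c₁ + a, Set.add_mem_add hc₁ ha, ?_⟩
        refine (QuotientAddGroup.eq).2 ?_
        have heq : -(c₁ + a) + g = x - a := by rw [hxdef]; abel
        rw [heq]
        exact AddSubgroup.mem_inf.2 ⟨hzX, hzY⟩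
      · have hψs : ‖ψ (QuotientAddGroup.mk g)‖ < δ₂ := by
          have := hK₂ h₂
          rwa [Set.mem_preimage, Metric.mem_ball, dist_zero_right] at this
        calc ‖φ (QuotientAddGroup.mk g)‖ * ‖ψ (QuotientAddGroup.mk g)‖
            ≤ (Mφ + 1) * ‖ψ (QuotientAddGroup.mk g)‖ :=
              mul_le_mul_of_nonneg_right (by linarith) (norm_nonneg _)
          _ < (Mφ + 1) * δ₂ := by exact mul_lt_mul_of_pos_left hψs hMφ
          _ = ε := by rw [hδ₂def, mul_comm, div_mul_cancel₀ _ (ne_of_gt hMφ)]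
    · have hφs : ‖φ (QuotientAddGroup.mk g)‖ < δ₁ := by
        have := hK₁ h₁
        rwa [Set.mem_preimage, Metric.mem_ball, dist_zero_right] at this
      calc ‖φ (QuotientAddGroup.mk g)‖ * ‖ψ (QuotientAddGroup.mk g)‖
          ≤ ‖φ (QuotientAddGroup.mk g)‖ * (Mψ + 1) :=
            mul_le_mul_of_nonneg_left (by linarith) (norm_nonneg _)
        _ < δ₁ * (Mψ + 1) := by exact mul_lt_mul_of_pos_right hφs hMψ
        _ = ε := by rw [hδ₁def, div_mul_cancel₀ _ (ne_of_gt hMψ)]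
  exact ⟨⟨⟨χ₀, hcont⟩, hz⟩, fun g => (hmk g).symm⟩

/-! ### The span of products -/

/-- The set of products from the statement. -/
def Sset (X Y : AddSubgroup G) : Set (BoundedContinuousFunction G ℂ) :=
  {f : BoundedContinuousFunction G ℂ | ∃ a ∈ CGpart X, ∃ b ∈ CGpart Y, f = a * b}

lemma CGpart_mul' {H : AddSubgroup G} {a a' : BoundedContinuousFunction G ℂ}
    (ha : a ∈ CGpart H) (ha' : a' ∈ CGpart H) : a * a' ∈ CGpart H := by
  obtain ⟨φ, hφ⟩ := ha; obtain ⟨ψ, hψ⟩ := ha'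
  exact ⟨φ * ψ, fun g => by simp [hφ g, hψ g]⟩

lemma CGpart_star' {H : AddSubgroup G} {a : BoundedContinuousFunction G ℂ}
    (ha : a ∈ CGpart H) : star a ∈ CGpart H := by
  obtain ⟨φ, hφ⟩ := ha
  exact ⟨star φ, fun g => by simp [hφ g]⟩

lemma Sset_mul {X Y : AddSubgroup G} {f f' : BoundedContinuousFunction G ℂ}
    (hf : f ∈ Sset X Y) (hf' : f' ∈ Sset X Y) : f * f' ∈ Sset X Y := by
  obtain ⟨a, ha, b, hb, rfl⟩ := hf
  obtain ⟨a', ha', b', hb', rfl⟩ := hf'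
  exact ⟨a * a', CGpart_mul' ha ha', b * b', CGpart_mul' hb hb', mul_mul_mul_comm a b a' b'⟩

lemma Sset_star {X Y : AddSubgroup G} {f : BoundedContinuousFunction G ℂ}
    (hf : f ∈ Sset X Y) : star f ∈ Sset X Y := by
  obtain ⟨a, ha, b, hb, rfl⟩ := hf
  exact ⟨star a, CGpart_star' ha, star b, CGpart_star' hb, star_mul' a b⟩

lemma Mspan_mul {X Y : AddSubgroup G} {m m' : BoundedContinuousFunction G ℂ}
    (hm : m ∈ Submodule.span ℂ (Sset X Y)) (hm' : m' ∈ Submodule.span ℂ (Sset X Y)) :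
    m * m' ∈ Submodule.span ℂ (Sset X Y) := by
  induction hm, hm' using Submodule.span_induction₂ with
  | mem_mem x y hx hy => exact Submodule.subset_span (Sset_mul hx hy)
  | zero_left y hy => rw [zero_mul]; exact Submodule.zero_mem _
  | zero_right x hx => rw [mul_zero]; exact Submodule.zero_mem _
  | add_left x y z hx hy hz h1 h2 => rw [add_mul]; exact Submodule.add_mem _ h1 h2
  | add_right x y z hx hy hz h1 h2 => rw [mul_add]; exact Submodule.add_mem _ h1 h2
  | smul_left r x y hx hy h1 => rw [smul_mul_assoc]; exact Submodule.smul_mem _ _ h1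
  | smul_right r x y hx hy h1 => rw [mul_smul_comm]; exact Submodule.smul_mem _ _ h1

lemma Mspan_star {X Y : AddSubgroup G} {m : BoundedContinuousFunction G ℂ}
    (hm : m ∈ Submodule.span ℂ (Sset X Y)) : star m ∈ Submodule.span ℂ (Sset X Y) := by
  induction hm using Submodule.span_induction with
  | mem x hx => exact Submodule.subset_span (Sset_star hx)
  | zero => rw [star_zero]; exact Submodule.zero_mem _
  | add x y hx hy h1 h2 => rw [star_add]; exact Submodule.add_mem _ h1 h2
  | smul c x hx h1 => rw [star_smul]; exact Submodule.smul_mem _ _ h1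

/-- `CGpart H` as a submodule. -/
noncomputable def CGsub (H : AddSubgroup G) : Submodule ℂ (BoundedContinuousFunction G ℂ) where
  carrier := CGpart H
  add_mem' := by
    rintro a b ⟨φ, hφ⟩ ⟨ψ, hψ⟩
    exact ⟨φ + ψ, fun g => by simp [hφ g, hψ g]⟩
  zero_mem' := ⟨0, fun g => by simp⟩
  smul_mem' := by
    rintro c a ⟨φ, hφ⟩
    exact ⟨c • φ, fun g => by simp [hφ g]⟩

lemma Sset_subset [LocallyCompactSpace G] [T2Space G] (X Y : AddSubgroup G)
    (hX : IsClosed (X : Set G)) (hY : IsClosed (Y : Set G)) (h : AddCompatible X Y) :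
    Sset X Y ⊆ CGpart (X ⊓ Y) := by
  rintro f ⟨a, ⟨φ, hφ⟩, b, ⟨ψ, hψ⟩, rfl⟩
  obtain ⟨χ, hχ⟩ := prod_descend X Y hX hY h φ ψ
  exact ⟨χ, fun g => by
    rw [BoundedContinuousFunction.mul_apply, hφ g, hψ g, hχ g]⟩

/-! ### The star subalgebra on the one-point compactification -/

/-- The star subalgebra of `C(OnePoint (G ⧸ (X ⊓ Y)), ℂ)` given by constants plus extensions of
elements of the span of products. -/
noncomputable def AA [LocallyCompactSpace G] (X Y : AddSubgroup G)
    [T2Space (G ⧸ (X ⊓ Y))] : StarSubalgebra ℂ C(OnePoint (G ⧸ (X ⊓ Y)), ℂ) where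
  carrier := {F | ∃ χ : C₀(G ⧸ (X ⊓ Y), ℂ),
      pbk (X ⊓ Y) χ ∈ Submodule.span ℂ (Sset X Y) ∧ ∃ c : ℂ, F = extOP χ + c • 1}
  mul_mem' := by
    rintro F F' ⟨χ, hχ, c, rfl⟩ ⟨χ', hχ', c', rfl⟩
    refine ⟨χ * χ' + c' • χ + c • χ', ?_, c * c', extOP_identity_mul χ χ' c c'⟩
    rw [pbk_add, pbk_add, pbk_mul, pbk_smul, pbk_smul]
    exact Submodule.add_mem _ (Submodule.add_mem _ (Mspan_mul hχ hχ')
      (Submodule.smul_mem _ _ hχ)) (Submodule.smul_mem _ _ hχ')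
  add_mem' := by
    rintro F F' ⟨χ, hχ, c, rfl⟩ ⟨χ', hχ', c', rfl⟩
    refine ⟨χ + χ', ?_, c + c', extOP_identity_add χ χ' c c'⟩
    rw [pbk_add]
    exact Submodule.add_mem _ hχ hχ'
  one_mem' := ⟨0, by rw [pbk_zero]; exact Submodule.zero_mem _, 1, extOP_identity_one⟩
  zero_mem' := ⟨0, by rw [pbk_zero]; exact Submodule.zero_mem _, 0, by
    rw [← extOP_identity_algebraMap (0 : ℂ), map_zero]⟩
  algebraMap_mem' := fun c => ⟨0, by rw [pbk_zero]; exact Submodule.zero_mem _, c,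
    extOP_identity_algebraMap c⟩
  star_mem' := by
    rintro F ⟨χ, hχ, c, rfl⟩
    refine ⟨star χ, ?_, star c, extOP_identity_star χ c⟩
    rw [pbk_star]
    exact Mspan_star hχ

end StmtNine

/-- For compatible closed subgroups `X, Y` of an LCA group `G`, the closed linear span of
products `C_G(X) · C_G(Y)` equals `C_G(X ∩ Y)` inside `C_b^u(G)`. -/
theorem stmt9 {G : Type*} [AddCommGroup G] [TopologicalSpace G] [IsTopologicalAddGroup G]
    [LocallyCompactSpace G] [T2Space G]
    (X Y : AddSubgroup G) (hX : IsClosed (X : Set G)) (hY : IsClosed (Y : Set G))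
    (h : AddCompatible X Y) :
    closure (↑(Submodule.span ℂ
        {f : BoundedContinuousFunction G ℂ | ∃ a ∈ CGpart X, ∃ b ∈ CGpart Y, f = a * b}) :
        Set (BoundedContinuousFunction G ℂ)) =
      CGpart (X ⊓ Y) := by
  classical
  have hXY : IsClosed ((X ⊓ Y : AddSubgroup G) : Set G) := by
    have hco : ((X ⊓ Y : AddSubgroup G) : Set G) = (X : Set G) ∩ (Y : Set G) := by
      ext g; simp [AddSubgroup.mem_inf]
    rw [hco]; exact hX.inter hY
  haveI := hXY
  haveI := hX
  haveI := hY
  show closure (↑(Submodule.span ℂ (StmtNine.Sset X Y)) :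
      Set (BoundedContinuousFunction G ℂ)) = CGpart (X ⊓ Y)
  apply Set.Subset.antisymm
  · refine closure_minimal ?_ (StmtNine.isClosed_CGpart _)
    exact Submodule.span_le (p := StmtNine.CGsub (X ⊓ Y)).2
      (StmtNine.Sset_subset X Y hX hY h)
  · intro f hf
    obtain ⟨χ, hχ⟩ := hf
    have hfeq : f = StmtNine.pbk (X ⊓ Y) χ := by ext g; exact hχ g
    rw [hfeq]
    set M := Submodule.span ℂ (StmtNine.Sset X Y) with hM
    -- builder for elements of `M` from separating functions
    have build : ∀ (φ : C₀(G ⧸ X, ℂ)) (ψ : C₀(G ⧸ Y, ℂ)),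
        ∃ χ₁ : C₀(G ⧸ (X ⊓ Y), ℂ), StmtNine.pbk (X ⊓ Y) χ₁ ∈ M ∧
          ∀ g : G, χ₁ (QuotientAddGroup.mk g) =
            φ (QuotientAddGroup.mk g) * ψ (QuotientAddGroup.mk g) := by
      intro φ ψ
      obtain ⟨χ₁, hχ₁⟩ := StmtNine.prod_descend X Y hX hY h φ ψ
      refine ⟨χ₁, ?_, fun g => (hχ₁ g).symm⟩
      have hpb : StmtNine.pbk (X ⊓ Y) χ₁ = StmtNine.pbk X φ * StmtNine.pbk Y ψ := by
        ext g
        simp [← hχ₁ g]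
      rw [hpb]
      exact Submodule.subset_span ⟨StmtNine.pbk X φ, StmtNine.pbk_mem_CGpart _ _,
        StmtNine.pbk Y ψ, StmtNine.pbk_mem_CGpart _ _, rfl⟩
    have sep0 : ∀ g : G, ∃ χ₁ : C₀(G ⧸ (X ⊓ Y), ℂ), StmtNine.pbk (X ⊓ Y) χ₁ ∈ M ∧
        χ₁ (QuotientAddGroup.mk g) = 1 := by
      intro g
      obtain ⟨φ, hφ1, _⟩ := StmtNine.exists_C0_one_zero (Z := G ⧸ X)
        (u := QuotientAddGroup.mk g) (t := ∅) isClosed_empty (Set.notMem_empty _)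
      obtain ⟨ψ, hψ1, _⟩ := StmtNine.exists_C0_one_zero (Z := G ⧸ Y)
        (u := QuotientAddGroup.mk g) (t := ∅) isClosed_empty (Set.notMem_empty _)
      obtain ⟨χ₁, hχM, hval⟩ := build φ ψ
      exact ⟨χ₁, hχM, by rw [hval g, hφ1, hψ1, one_mul]⟩
    have sepX : ∀ g g' : G, ¬(-g + g' ∈ X) → ∃ χ₁ : C₀(G ⧸ (X ⊓ Y), ℂ),
        StmtNine.pbk (X ⊓ Y) χ₁ ∈ M ∧ χ₁ (QuotientAddGroup.mk g) = 1 ∧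
          χ₁ (QuotientAddGroup.mk g') = 0 := by
      intro g g' hg
      have hne : (QuotientAddGroup.mk g : G ⧸ X) ≠ QuotientAddGroup.mk g' :=
        fun hcon => hg (QuotientAddGroup.eq.1 hcon)
      obtain ⟨φ, hφ1, hφ0⟩ := StmtNine.exists_C0_one_zero (Z := G ⧸ X)
        (u := QuotientAddGroup.mk g) (t := {QuotientAddGroup.mk g'}) isClosed_singleton
        (by simpa using hne)
      obtain ⟨ψ, hψ1, _⟩ := StmtNine.exists_C0_one_zero (Z := G ⧸ Y)
        (u := QuotientAddGroup.mk g) (t := ∅) isClosed_empty (Set.notMem_empty _)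
      obtain ⟨χ₁, hχM, hval⟩ := build φ ψ
      exact ⟨χ₁, hχM, by rw [hval g, hφ1, hψ1, one_mul],
        by rw [hval g', hφ0 _ (Set.mem_singleton _), zero_mul]⟩
    have sepY : ∀ g g' : G, ¬(-g + g' ∈ Y) → ∃ χ₁ : C₀(G ⧸ (X ⊓ Y), ℂ),
        StmtNine.pbk (X ⊓ Y) χ₁ ∈ M ∧ χ₁ (QuotientAddGroup.mk g) = 1 ∧
          χ₁ (QuotientAddGroup.mk g') = 0 := by
      intro g g' hg
      have hne : (QuotientAddGroup.mk g : G ⧸ Y) ≠ QuotientAddGroup.mk g' :=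
        fun hcon => hg (QuotientAddGroup.eq.1 hcon)
      obtain ⟨ψ, hψ1, hψ0⟩ := StmtNine.exists_C0_one_zero (Z := G ⧸ Y)
        (u := QuotientAddGroup.mk g) (t := {QuotientAddGroup.mk g'}) isClosed_singleton
        (by simpa using hne)
      obtain ⟨φ, hφ1, _⟩ := StmtNine.exists_C0_one_zero (Z := G ⧸ X)
        (u := QuotientAddGroup.mk g) (t := ∅) isClosed_empty (Set.notMem_empty _)
      obtain ⟨χ₁, hχM, hval⟩ := build φ ψ
      exact ⟨χ₁, hχM, by rw [hval g, hφ1, hψ1, one_mul],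
        by rw [hval g', hψ0 _ (Set.mem_singleton _), mul_zero]⟩
    -- separation of points for the star subalgebra
    have hsep : (StmtNine.AA X Y).SeparatesPoints := by
      intro p q hpq
      induction p using OnePoint.rec with
      | infty =>
        induction q using OnePoint.rec with
        | infty => exact absurd rfl hpq
        | coe v =>
          obtain ⟨g, rfl⟩ := QuotientAddGroup.mk_surjective v
          obtain ⟨χ₁, hχM, h1⟩ := sep0 g
          have hFA : StmtNine.extOP χ₁ ∈ StmtNine.AA X Y := ⟨χ₁, hχM, 0, by simp⟩
          refine ⟨⇑(StmtNine.extOP χ₁), ⟨StmtNine.extOP χ₁, hFA, rfl⟩, ?_⟩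
          simp [h1]
      | coe u =>
        obtain ⟨g, rfl⟩ := QuotientAddGroup.mk_surjective u
        induction q using OnePoint.rec with
        | infty =>
          obtain ⟨χ₁, hχM, h1⟩ := sep0 g
          have hFA : StmtNine.extOP χ₁ ∈ StmtNine.AA X Y := ⟨χ₁, hχM, 0, by simp⟩
          refine ⟨⇑(StmtNine.extOP χ₁), ⟨StmtNine.extOP χ₁, hFA, rfl⟩, ?_⟩
          simp [h1]
        | coe v =>
          obtain ⟨g', rfl⟩ := QuotientAddGroup.mk_surjective v
          have hne : (QuotientAddGroup.mk g : G ⧸ (X ⊓ Y)) ≠ QuotientAddGroup.mk g' := by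
            intro hcon
            exact hpq (congrArg _ hcon)
          have hnotin : ¬(-g + g' ∈ X ⊓ Y) := fun hc => hne (QuotientAddGroup.eq.2 hc)
          rw [AddSubgroup.mem_inf, not_and_or] at hnotin
          rcases hnotin with hc | hc
          · obtain ⟨χ₁, hχM, h1, h0⟩ := sepX g g' hc
            have hFA : StmtNine.extOP χ₁ ∈ StmtNine.AA X Y := ⟨χ₁, hχM, 0, by simp⟩
            refine ⟨⇑(StmtNine.extOP χ₁), ⟨StmtNine.extOP χ₁, hFA, rfl⟩, ?_⟩
            simp [h1, h0]
          · obtain ⟨χ₁, hχM, h1, h0⟩ := sepY g g' hc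
            have hFA : StmtNine.extOP χ₁ ∈ StmtNine.AA X Y := ⟨χ₁, hχM, 0, by simp⟩
            refine ⟨⇑(StmtNine.extOP χ₁), ⟨StmtNine.extOP χ₁, hFA, rfl⟩, ?_⟩
            simp [h1, h0]
    have htop :=
      ContinuousMap.starSubalgebra_topologicalClosure_eq_top_of_separatesPoints
        (StmtNine.AA X Y) hsep
    have hmem : StmtNine.extOP χ ∈
        closure ((StmtNine.AA X Y : Set (C(OnePoint (G ⧸ (X ⊓ Y)), ℂ)))) := by
      have : StmtNine.extOP χ ∈ (StmtNine.AA X Y).topologicalClosure := by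
        rw [htop]; exact StarSubalgebra.mem_top
      exact this
    rw [Metric.mem_closure_iff] at hmem
    rw [Metric.mem_closure_iff]
    intro ε hε
    obtain ⟨F, hFA, hdist⟩ := hmem (ε/3) (by positivity)
    obtain ⟨χ', hχ'M, c, rfl⟩ := hFA
    rw [dist_comm] at hdist
    have hc : ‖c‖ < ε/3 := by
      have hinf : dist ((StmtNine.extOP χ' + c • 1) (OnePoint.infty : OnePoint (G ⧸ (X ⊓ Y))))
          (StmtNine.extOP χ (OnePoint.infty : OnePoint (G ⧸ (X ⊓ Y)))) ≤
          dist (StmtNine.extOP χ' + c • 1) (StmtNine.extOP χ) :=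
        ContinuousMap.dist_apply_le_dist _
      simp only [ContinuousMap.add_apply, ContinuousMap.smul_apply, ContinuousMap.one_apply,
        smul_eq_mul, mul_one, StmtNine.extOP_infty, zero_add] at hinf
      rw [dist_zero_right] at hinf
      linarith
    refine ⟨StmtNine.pbk (X ⊓ Y) χ', hχ'M, ?_⟩
    have hle : dist (StmtNine.pbk (X ⊓ Y) χ) (StmtNine.pbk (X ⊓ Y) χ') ≤ ε/3 + ε/3 := by
      refine (BoundedContinuousFunction.dist_le (by positivity)).2 fun g => ?_
      have h2 : dist (χ (QuotientAddGroup.mk g)) (χ' (QuotientAddGroup.mk g) + c) ≤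
          dist (StmtNine.extOP χ) (StmtNine.extOP χ' + c • 1) := by
        have := ContinuousMap.dist_apply_le_dist (f := StmtNine.extOP χ)
          (g := StmtNine.extOP χ' + c • 1) ((QuotientAddGroup.mk g : G ⧸ (X ⊓ Y)) : OnePoint (G ⧸ (X ⊓ Y)))
        simpa using this
      have h3 : dist (χ (QuotientAddGroup.mk g)) (χ' (QuotientAddGroup.mk g)) ≤ dist (χ (QuotientAddGroup.mk g)) (χ' (QuotientAddGroup.mk g) + c) + dist (χ' (QuotientAddGroup.mk g) + c) (χ' (QuotientAddGroup.mk g)) :=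
        dist_triangle _ _ _
      have h4 : dist (χ' (QuotientAddGroup.mk g) + c) (χ' (QuotientAddGroup.mk g)) = ‖c‖ := by
        rw [dist_eq_norm]
        simp
      rw [dist_comm] at hdist
      simp only [StmtNine.pbk_apply]
      linarith
    linarith [hle]
end

section
/- Let E, F be Hilbert spaces and M, N closed linear subspaces of L(E,F) with M M* M ⊆ M, N N* N ⊆ N, N ⊆ M, and such that the closed spans satisfy N*·N = M*·M and N·N* = M·M*. Then N = M. -/
open ContinuousLinearMap

variable {E F : Type*}
  [NormedAddCommGroup E] [InnerProductSpace ℂ E] [CompleteSpace E]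
  [NormedAddCommGroup F] [InnerProductSpace ℂ F] [CompleteSpace F]

/-- The closed linear span of `M* · M` inside `L(E)`. -/
noncomputable def algA (M : Set (E →L[ℂ] F)) : Set (E →L[ℂ] E) :=
  closure (↑(Submodule.span ℂ
    {x : E →L[ℂ] E | ∃ S ∈ M, ∃ T ∈ M, x = (adjoint S) ∘L T}) : Set (E →L[ℂ] E))

/-- The closed linear span of `M · M*` inside `L(F)`. -/
noncomputable def algB (M : Set (E →L[ℂ] F)) : Set (F →L[ℂ] F) :=
  closure (↑(Submodule.span ℂ
    {x : F →L[ℂ] F | ∃ S ∈ M, ∃ T ∈ M, x = S ∘L (adjoint T)}) : Set (F →L[ℂ] F))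

/-- Auxiliary: a continuous linear map sends the closed span of a set into a closed
submodule, provided it sends the set itself there. -/
theorem aux_mem_of_closure_span {X Y : Type*} [NormedAddCommGroup X] [NormedSpace ℂ X]
    [NormedAddCommGroup Y] [NormedSpace ℂ Y] (φ : X →L[ℂ] Y) (P : Submodule ℂ Y)
    (hP : IsClosed (P : Set Y)) {s : Set X} (hs : ∀ x ∈ s, φ x ∈ P) {x : X}
    (hx : x ∈ closure ((Submodule.span ℂ s : Submodule ℂ X) : Set X)) : φ x ∈ P := by
  have h1 : IsClosed ((P.comap (φ : X →ₗ[ℂ] Y) : Submodule ℂ X) : Set X) :=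
    hP.preimage φ.continuous
  have h2 : Submodule.span ℂ s ≤ P.comap (φ : X →ₗ[ℂ] Y) := Submodule.span_le.mpr hs
  exact h1.closure_subset_iff.mpr h2 hx

/-- Auxiliary elementary estimate: `u (1-u)^m ≤ 1/m` on `[0,1]`. -/
theorem aux_bound {u : ℝ} (hu0 : 0 ≤ u) (hu1 : u ≤ 1) {m : ℕ} (hm : 1 ≤ m) :
    u * (1 - u) ^ m ≤ 1 / m := by
  have h1 : (0:ℝ) ≤ 1 - u := by linarith
  have hm0 : (0:ℝ) < m := by exact_mod_cast hm
  have h2 : (1 - u) ^ m ≤ Real.exp (-((m:ℝ) * u)) := by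
    calc (1 - u) ^ m ≤ (Real.exp (-u)) ^ m := by
          refine pow_le_pow_left₀ h1 ?_ m
          nlinarith [Real.add_one_le_exp (-u)]
      _ = Real.exp (-((m:ℝ) * u)) := by
          rw [← Real.exp_nat_mul]; congr 1; ring
  have h3 : (m:ℝ) * u * Real.exp (-((m:ℝ) * u)) ≤ 1 := by
    have hx := Real.add_one_le_exp ((m:ℝ) * u)
    have hpos := Real.exp_pos ((m:ℝ) * u)
    rw [Real.exp_neg, ← div_eq_mul_inv, div_le_one hpos]
    linarith
  calc u * (1 - u) ^ m ≤ u * Real.exp (-((m:ℝ) * u)) :=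
        mul_le_mul_of_nonneg_left h2 hu0
    _ = (1 / m) * ((m:ℝ) * u * Real.exp (-((m:ℝ) * u))) := by field_simp
    _ ≤ (1 / m) * 1 := mul_le_mul_of_nonneg_left h3 (by positivity)
    _ = 1 / m := mul_one _

set_option maxHeartbeats 1000000 in
/-- If `M, N` are Hilbert C*-submodules of `L(E,F)` with `N ⊆ M`, `N*·N = M*·M` and
`N·N* = M·M*`, then `N = M`. -/
theorem stmt11 (M N : Submodule ℂ (E →L[ℂ] F))
    (hMc : IsClosed (M : Set (E →L[ℂ] F))) (hNc : IsClosed (N : Set (E →L[ℂ] F)))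
    (hM : ∀ T ∈ M, ∀ S ∈ M, ∀ R ∈ M, T ∘L ((adjoint S) ∘L R) ∈ M)
    (hN : ∀ T ∈ N, ∀ S ∈ N, ∀ R ∈ N, T ∘L ((adjoint S) ∘L R) ∈ N)
    (hsub : (N : Set (E →L[ℂ] F)) ⊆ (M : Set (E →L[ℂ] F)))
    (hA : algA (N : Set (E →L[ℂ] F)) = algA (M : Set (E →L[ℂ] F)))
    (hB : algB (N : Set (E →L[ℂ] F)) = algB (M : Set (E →L[ℂ] F))) :
    N = M := by
  refine le_antisymm (fun x hx => hsub hx) fun T hT => ?_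
  -- Step 1: right multiplication by elements of `N` maps `algB N` into `N`.
  have step1 : ∀ R ∈ N, ∀ y ∈ algB (N : Set (E →L[ℂ] F)), y ∘L R ∈ N := by
    intro R hR y hy
    refine aux_mem_of_closure_span ((compL ℂ E F F).flip R) N hNc ?_ hy
    rintro z ⟨P, hP, Q, hQ, rfl⟩
    show (P ∘L adjoint Q) ∘L R ∈ N
    rw [comp_assoc]
    exact hN P hP Q hQ R hR
  -- Step 2: left multiplication by elements of `M` maps `algA N` into `N`.
  have step2 : ∀ T' ∈ M, ∀ x ∈ algA (N : Set (E →L[ℂ] F)), T' ∘L x ∈ N := by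
    intro T' hT' x hx
    refine aux_mem_of_closure_span (compL ℂ E E F T') N hNc ?_ hx
    rintro z ⟨S, hS, R, hR, rfl⟩
    have h1 : (T' ∘L adjoint S) ∈ algB (N : Set (E →L[ℂ] F)) := by
      rw [hB]
      exact subset_closure (Submodule.subset_span ⟨T', hT', S, hsub hS, rfl⟩)
    have h2 := step1 R hR _ h1
    rw [comp_assoc] at h2
    exact h2
  -- The closed span `algA N` as a closed submodule `PA`.
  set PA : Submodule ℂ (E →L[ℂ] E) := (Submodule.span ℂ
    {x : E →L[ℂ] E | ∃ S ∈ (N : Set (E →L[ℂ] F)), ∃ T' ∈ (N : Set (E →L[ℂ] F)),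
      x = (adjoint S) ∘L T'}).topologicalClosure with hPA_def
  have hPAc : IsClosed (PA : Set (E →L[ℂ] E)) := Submodule.isClosed_topologicalClosure _
  have hPAeq : (PA : Set (E →L[ℂ] E)) = algA (N : Set (E →L[ℂ] F)) :=
    Submodule.topologicalClosure_coe _
  have toAlg : ∀ z : E →L[ℂ] E, z ∈ PA → z ∈ algA (N : Set (E →L[ℂ] F)) := by
    intro z hz
    rw [← hPAeq]
    exact hz
  -- Step 3: `algA N` is closed under multiplication.
  have step3 : ∀ y ∈ algA (N : Set (E →L[ℂ] F)), ∀ x ∈ algA (N : Set (E →L[ℂ] F)),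
      x ∘L y ∈ PA := by
    intro y hy x hx
    refine aux_mem_of_closure_span ((compL ℂ E E E).flip y) PA hPAc ?_ hx
    rintro z ⟨S, hS, R, hR, rfl⟩
    show (adjoint S ∘L R) ∘L y ∈ PA
    rw [comp_assoc]
    have h1 : R ∘L y ∈ N := step2 R (hsub hR) y hy
    exact Submodule.le_topologicalClosure _ (Submodule.subset_span ⟨S, hS, _, h1, rfl⟩)
  -- The positive operator `a = T* T`.
  obtain ⟨a, ha_def⟩ : ∃ a : E →L[ℂ] E, a = adjoint T ∘L T := ⟨_, rfl⟩
  have haPA : a ∈ PA := by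
    rw [ha_def, ← SetLike.mem_coe, hPAeq, hA]
    exact subset_closure (Submodule.subset_span ⟨T, hT, T, hT, rfl⟩)
  have ha_sa : IsSelfAdjoint a := by
    rw [IsSelfAdjoint, ha_def, star_eq_adjoint, adjoint_comp, adjoint_adjoint]
  have ha_pos : (0 : E →L[ℂ] E) ≤ a := by
    rw [ha_def, nonneg_iff_isPositive]
    have h := (isPositive_one (E := F)).adjoint_conj T
    rwa [one_def, id_comp] at h
  obtain ⟨c, hc_def⟩ : ∃ c : ℝ, c = ‖a‖ + 1 := ⟨_, rfl⟩
  have hc0 : 0 < c := by have := norm_nonneg a; rw [hc_def]; linarith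
  have hspec : ∀ t ∈ spectrum ℝ a, 0 ≤ t ∧ t ≤ c := by
    intro t ht
    refine ⟨spectrum_nonneg_of_nonneg ha_pos ht, ?_⟩
    have h1 : ‖t‖ ≤ ‖a‖ * ‖(1 : E →L[ℂ] E)‖ := by
      simpa using spectrum.subset_closedBall_norm_mul a ht
    have h2 : ‖(1 : E →L[ℂ] E)‖ ≤ 1 := by rw [one_def]; exact norm_id_le
    have h3 := norm_nonneg a
    calc t ≤ ‖t‖ := le_abs_self t
      _ ≤ ‖a‖ * ‖(1 : E →L[ℂ] E)‖ := h1
      _ ≤ ‖a‖ * 1 := by nlinarith [norm_nonneg (1 : E →L[ℂ] E)]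
      _ ≤ c := by rw [hc_def]; linarith
  -- `s = c⁻¹ • a`.
  obtain ⟨s, hs_def⟩ : ∃ s : E →L[ℂ] E, s = c⁻¹ • a := ⟨_, rfl⟩
  have hsPA : s ∈ PA := by
    rw [hs_def, ← algebraMap_smul ℂ c⁻¹ a]
    exact PA.smul_mem _ haPA
  have hs_sa : IsSelfAdjoint s := by
    rw [hs_def, IsSelfAdjoint, star_smul, star_trivial, ha_sa.star_eq]
  -- the approximants `bₙ = 1 - (1-s)ⁿ` belong to `PA`.
  have hbPA : ∀ n : ℕ, 1 - (1 - s) ^ n ∈ PA := by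
    intro n
    induction n with
    | zero => simpa using PA.zero_mem
    | succ n ih =>
      have hcomm : s * (1 - s) ^ n = (1 - s) ^ n * s :=
        (((Commute.one_right s).sub_right (Commute.refl s)).pow_right n).eq
      have key : 1 - (1 - s) ^ (n + 1) =
          s + ((1 - (1 - s) ^ n) - s * (1 - (1 - s) ^ n)) := by
        rw [pow_succ, mul_sub, mul_one, ← hcomm]
        noncomm_ring
      rw [key]
      have hmul : s * (1 - (1 - s) ^ n) ∈ PA :=
        step3 _ (toAlg _ ih) _ (toAlg _ hsPA)
      exact PA.add_mem hsPA (PA.sub_mem ih hmul)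
  -- functional calculus representation and norm estimate
  have hcfc1 : cfc (fun t : ℝ => 1 - c⁻¹ * t) a = 1 - s := by
    rw [cfc_sub (fun _ => (1:ℝ)) (fun t => c⁻¹ * t) a, cfc_const 1 a ha_sa, map_one,
      cfc_const_mul_id c⁻¹ a ha_sa, hs_def]
  have hest : ∀ n : ℕ, 1 ≤ n →
      ‖T - T ∘L (1 - (1 - s) ^ n)‖ ^ 2 ≤ c / (2 * (n:ℝ)) := by
    intro n hn
    have hr_sa : IsSelfAdjoint ((1 - s) ^ n) :=
      (((IsSelfAdjoint.one (R := E →L[ℂ] E)).sub hs_sa)).pow n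
    have hr_adj : adjoint ((1 - s) ^ n) = (1 - s) ^ n := by
      rw [← star_eq_adjoint, hr_sa.star_eq]
    have hd : T - T ∘L (1 - (1 - s) ^ n) = T ∘L (1 - s) ^ n := by
      rw [comp_sub, one_def, comp_id, sub_sub_cancel]
    have hd2 : ‖T ∘L (1 - s) ^ n‖ ^ 2 = ‖adjoint (T ∘L (1 - s) ^ n) ∘L (T ∘L (1 - s) ^ n)‖ := by
      rw [norm_adjoint_comp_self, sq]
    have hadj : adjoint (T ∘L (1 - s) ^ n) ∘L (T ∘L (1 - s) ^ n) =
        (1 - s) ^ n * (a * (1 - s) ^ n) := by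
      rw [ha_def]
      simp only [mul_def, adjoint_comp, hr_adj, comp_assoc]
    have hcfc2 : cfc (fun t : ℝ => (1 - c⁻¹ * t) ^ n) a = (1 - s) ^ n := by
      rw [cfc_pow (fun t : ℝ => 1 - c⁻¹ * t) n a (by fun_prop) ha_sa, hcfc1]
    have hcfc3 : cfc (fun t : ℝ => (1 - c⁻¹ * t) ^ n * (t * (1 - c⁻¹ * t) ^ n)) a =
        (1 - s) ^ n * (a * (1 - s) ^ n) := by
      rw [cfc_mul (fun t : ℝ => (1 - c⁻¹ * t) ^ n) (fun t : ℝ => t * (1 - c⁻¹ * t) ^ n) a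
          (by fun_prop) (by fun_prop),
        cfc_mul (fun t : ℝ => t) (fun t : ℝ => (1 - c⁻¹ * t) ^ n) a
          (by fun_prop) (by fun_prop),
        cfc_id' ℝ a ha_sa, hcfc2]
    have hnorm : ‖(1 - s) ^ n * (a * (1 - s) ^ n)‖ ≤ c / (2 * (n:ℝ)) := by
      rw [← hcfc3]
      have hn0 : (0:ℝ) < 2 * (n:ℝ) := by
        have : (1:ℝ) ≤ (n:ℝ) := by exact_mod_cast hn
        linarith
      refine norm_cfc_le (by positivity) ?_
      intro t ht
      obtain ⟨ht0, htc⟩ := hspec t ht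
      have hu0 : 0 ≤ c⁻¹ * t := by positivity
      have hu1 : c⁻¹ * t ≤ 1 := by
        rw [← div_eq_inv_mul, div_le_one hc0]; exact htc
      have h5 : (0:ℝ) ≤ 1 - c⁻¹ * t := by linarith
      have hct : c * (c⁻¹ * t) = t := by
        rw [← mul_assoc, mul_inv_cancel₀ (ne_of_gt hc0), one_mul]
      have heq : (1 - c⁻¹ * t) ^ n * (t * (1 - c⁻¹ * t) ^ n) =
          t * (1 - c⁻¹ * t) ^ (2 * n) := by
        rw [two_mul, pow_add]; ring
      have hb := aux_bound hu0 hu1 (m := 2 * n) (by omega)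
      push_cast at hb
      rw [Real.norm_eq_abs, heq,
        abs_of_nonneg (mul_nonneg ht0 (pow_nonneg h5 _))]
      have h7 : t * (1 - c⁻¹ * t) ^ (2 * n) =
          c * ((c⁻¹ * t) * (1 - c⁻¹ * t) ^ (2 * n)) := by
        rw [← mul_assoc, hct]
      rw [h7]
      calc c * ((c⁻¹ * t) * (1 - c⁻¹ * t) ^ (2 * n)) ≤ c * (1 / (2 * (n:ℝ))) :=
            mul_le_mul_of_nonneg_left hb (le_of_lt hc0)
        _ = c / (2 * (n:ℝ)) := by ring
    rw [hd, hd2, hadj]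
    exact hnorm
  -- conclude: `T` is in the closure of `N`.
  have hTclos : T ∈ closure (N : Set (E →L[ℂ] F)) := by
    rw [Metric.mem_closure_iff]
    intro ε hε
    obtain ⟨n, hn1, hn2⟩ : ∃ n : ℕ, 1 ≤ n ∧ c / (2 * (n:ℝ)) < ε ^ 2 := by
      obtain ⟨n, hn⟩ := exists_nat_gt (c / ε ^ 2)
      refine ⟨n + 1, by omega, ?_⟩
      have hε2 : (0:ℝ) < ε ^ 2 := by positivity
      rw [div_lt_iff₀ hε2] at hn
      have hden : (0:ℝ) < 2 * (((n:ℕ) + 1 : ℕ):ℝ) := by positivity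
      rw [div_lt_iff₀ hden]
      push_cast
      nlinarith [hε2, Nat.cast_nonneg (α := ℝ) n]
    refine ⟨T ∘L (1 - (1 - s) ^ n), step2 T hT _ (toAlg _ (hbPA n)), ?_⟩
    rw [dist_eq_norm]
    have h9 := hest n hn1
    nlinarith [norm_nonneg (T - T ∘L (1 - (1 - s) ^ n)), hε, h9, hn2]
  rwa [hNc.closure_eq] at hTclos
end

section
/- Let S be a semilattice, A an S-graded C*-algebra with components {A(σ)}, and M an S-graded Hilbert A-module with grading {M(σ)} satisfying M(σ)A(τ) ⊆ M(σ∧τ) and ⟨M(σ), M(τ)⟩ ⊆ A(σ∧τ). If M ∈ M(σ) and N ∈ M(τ), then there exist M', N' ∈ M(σ∧τ) with |M⟩⟨N| = |M'⟩⟨N'| as 'rank-one' operators in K(M); consequently |M⟩⟨N| belongs to the C*-subalgebra K(M(σ∧τ)) of K(M). -/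
open ContinuousLinearMap

section Aux

open Polynomial Filter


variable {E F : Type*} [NormedAddCommGroup E] [InnerProductSpace ℂ E] [CompleteSpace E]
  [NormedAddCommGroup F] [InnerProductSpace ℂ F] [CompleteSpace F]

private lemma est1' (w : ℝ) (hw : 0 ≤ w) (e d : ℝ) (he : 0 < e) (hed : e ≤ d) :
    w^5 * (d - e)^2 ≤ Real.sqrt d * ((w^2+e)^2 * (w^2+d)^2) := by
  set r := Real.sqrt d with hrdef
  have hr : 0 ≤ r := Real.sqrt_nonneg d
  have hr2 : r^2 = d := Real.sq_sqrt (le_of_lt (lt_of_lt_of_le he hed))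
  have h1 : (d - e)^2 ≤ d^2 := by nlinarith
  have h2 : w^4 ≤ (w^2+e)^2 := by nlinarith
  have hwr : w * r ≤ w^2 + r^2 := by nlinarith [sq_nonneg (w - r)]
  have h3' : w * (r^2)^2 ≤ r * (w^2 + r^2)^2 := by
    nlinarith [mul_le_mul_of_nonneg_right hwr (pow_nonneg hr 3),
      mul_nonneg hr (pow_nonneg hw 4), mul_nonneg (sq_nonneg w) (pow_nonneg hr 3)]
  have h3 : w * d^2 ≤ r * (w^2+d)^2 := by rw [← hr2]; exact h3'
  calc w^5 * (d - e)^2 ≤ w^5 * d^2 := by nlinarith [pow_nonneg hw 5]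
    _ = w^4 * (w * d^2) := by ring
    _ ≤ (w^2+e)^2 * (r * (w^2+d)^2) := by
        apply mul_le_mul h2 h3 (by positivity) (by positivity)
    _ = Real.sqrt d * ((w^2+e)^2 * (w^2+d)^2) := by rw [hrdef]; ring

private lemma est2' (t : ℝ) (ht : 0 ≤ t) (e d : ℝ) (he : 0 < e) (hed : e ≤ d) :
    |t| * ((Real.sqrt (Real.sqrt t))^3/((Real.sqrt (Real.sqrt t))^4 + e)
      - (Real.sqrt (Real.sqrt t))^3/((Real.sqrt (Real.sqrt t))^4 + d))^2 ≤ Real.sqrt d := by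
  set s := Real.sqrt (Real.sqrt t) with hsdef
  have hs : 0 ≤ s := Real.sqrt_nonneg _
  have hs4 : s^4 = t := by
    rw [show s^4 = (s^2)^2 by ring, hsdef, Real.sq_sqrt (Real.sqrt_nonneg t),
      Real.sq_sqrt ht]
  have hd : 0 < d := lt_of_lt_of_le he hed
  have hte : 0 < t + e := by linarith
  have htd : 0 < t + d := by linarith
  have hdiff : s^3/(s^4 + e) - s^3/(s^4 + d) = s^3 * (d - e) / ((t+e)*(t+d)) := by
    rw [hs4]; field_simp; ring
  rw [hdiff, abs_of_nonneg ht, div_pow, ← mul_div_assoc]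
  rw [div_le_iff₀ (by positivity)]
  have hw5 : t * (s^3 * (d-e))^2 = (s^2)^5 * (d - e)^2 := by rw [← hs4]; ring
  have hexp : ((t+e)*(t+d))^2 = ((s^2)^2+e)^2 * ((s^2)^2+d)^2 := by
    rw [show (s^2)^2 = s^4 by ring, hs4]; ring
  rw [hw5, hexp]
  exact est1' (s^2) (sq_nonneg s) e d he hed

private lemma est3' (t : ℝ) (ht : 0 ≤ t) (e : ℝ) (he : 0 < e) :
    |t| * ((Real.sqrt (Real.sqrt t))^3/((Real.sqrt (Real.sqrt t))^4 + e)
      * Real.sqrt (Real.sqrt t) - 1)^2 ≤ e := by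
  set s := Real.sqrt (Real.sqrt t) with hsdef
  have hs : 0 ≤ s := Real.sqrt_nonneg _
  have hs4 : s^4 = t := by
    rw [show s^4 = (s^2)^2 by ring, hsdef, Real.sq_sqrt (Real.sqrt_nonneg t),
      Real.sq_sqrt ht]
  have hte : 0 < t + e := by linarith
  have h1 : s^3/(s^4 + e) * s - 1 = -e / (t + e) := by
    rw [hs4]
    field_simp
    rw [← hs4]; ring
  rw [h1, abs_of_nonneg ht, div_pow, ← mul_div_assoc]
  rw [div_le_iff₀ (by positivity)]
  nlinarith [sq_nonneg (t - e), sq_nonneg t, mul_nonneg ht he.le]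

private lemma norm_comp_cfc_sq_le' (x : E →L[ℂ] F) (h : ℝ → ℝ) (hcont : Continuous h)
    {c : ℝ} (hc : 0 ≤ c)
    (hb : ∀ t ∈ spectrum ℝ (adjoint x ∘L x), |t| * (h t)^2 ≤ c) :
    ‖x ∘L cfc h (adjoint x ∘L x)‖^2 ≤ c := by
  set p := adjoint x ∘L x with hpdef
  have hpsa : IsSelfAdjoint p := by
    rw [isSelfAdjoint_iff, star_eq_adjoint, hpdef, adjoint_comp, adjoint_adjoint]
  have hbsa : IsSelfAdjoint (cfc h p) := cfc_predicate h p
  have key : adjoint (x ∘L cfc h p) ∘L (x ∘L cfc h p)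
      = cfc (fun t => h t * (t * h t)) p := by
    rw [cfc_mul _ _ p (by fun_prop) (by fun_prop), cfc_mul _ _ p (by fun_prop) (by fun_prop),
      cfc_id' ℝ p]
    rw [adjoint_comp, ← star_eq_adjoint (cfc h p), hbsa.star_eq]
    simp only [mul_def, ContinuousLinearMap.comp_assoc]
    rfl
  have hmain := norm_adjoint_comp_self (x ∘L cfc h p)
  rw [key] at hmain
  have hn : ‖cfc (fun t => h t * (t * h t)) p‖ ≤ c := by
    apply norm_cfc_le hc
    intro t ht
    calc ‖h t * (t * h t)‖ = |t| * (h t)^2 := by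
          rw [Real.norm_eq_abs, abs_mul, abs_mul,
            show |h t| * (|t| * |h t|) = |t| * (|h t| * |h t|) by ring, ← sq, sq_abs]
      _ ≤ c := hb t ht
  calc ‖x ∘L cfc h p‖^2 = ‖x ∘L cfc h p‖ * ‖x ∘L cfc h p‖ := sq _
    _ ≤ c := hmain ▸ hn

private lemma comp_cfc_mem' (x : E →L[ℂ] F) (Mx : Submodule ℂ (E →L[ℂ] F))
    (Ax : Submodule ℂ (E →L[ℂ] E))
    (hMcl : IsClosed (Mx : Set (E →L[ℂ] F)))
    (hMA : ∀ m ∈ Mx, ∀ a ∈ Ax, m ∘L a ∈ Mx)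
    (hAmul : ∀ a ∈ Ax, ∀ b ∈ Ax, a ∘L b ∈ Ax)
    (hpA : adjoint x ∘L x ∈ Ax)
    (h : ℝ → ℝ) (hcont : Continuous h) (h0 : h 0 = 0) (hx : x ∈ Mx) :
    x ∘L cfc h (adjoint x ∘L x) ∈ Mx := by
  set p := adjoint x ∘L x with hpdef
  have hpsa : IsSelfAdjoint p := by
    rw [isSelfAdjoint_iff, star_eq_adjoint, hpdef, adjoint_comp, adjoint_adjoint]
  have hpow : ∀ k : ℕ, p ^ (k + 1) ∈ Ax := by
    intro k
    induction k with
    | zero => simpa using hpA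
    | succ k ih =>
      have := hAmul _ ih _ hpA
      rw [← mul_def, ← pow_succ] at this
      exact this
  have hpoly : ∀ q : ℝ[X], q.coeff 0 = 0 → x ∘L (aeval p q) ∈ Mx := by
    intro q hq
    set Lx := ((compL ℂ E E F x).restrictScalars ℝ) with hLx
    have hrfl : ∀ b : E →L[ℂ] E, Lx b = x ∘L b := fun _ => rfl
    rw [← hrfl, aeval_eq_sum_range, map_sum]
    apply Submodule.sum_mem
    intro i hi
    rw [map_smul, hrfl]
    match i with
    | 0 => rw [hq, zero_smul]; exact Mx.zero_mem
    | (k + 1) =>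
      exact Mx.smul_of_tower_mem _ (hMA _ hx _ (hpow k))
  suffices hcl : x ∘L cfc h p ∈ closure (Mx : Set (E →L[ℂ] F)) by
    rwa [hMcl.closure_eq] at hcl
  rw [Metric.mem_closure_iff]
  intro ε hε
  have hKc : IsCompact (spectrum ℝ p ∪ {0}) :=
    (spectrum.isCompact p).union isCompact_singleton
  haveI : CompactSpace (spectrum ℝ p ∪ {0} : Set ℝ) := isCompact_iff_compactSpace.mp hKc
  set K : Set ℝ := spectrum ℝ p ∪ {0} with hKdef
  set δ : ℝ := ε / (2 * (‖x‖ + 1) + 1) with hδdef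
  have hδpos : 0 < δ := by positivity
  have hdense : ((⟨h, hcont⟩ : C(ℝ, ℝ)).restrict K) ∈
      closure ((polynomialFunctions K : Set C(K, ℝ))) := by
    have h1 := polynomialFunctions.topologicalClosure K
    have h2 : ((⟨h, hcont⟩ : C(ℝ, ℝ)).restrict K) ∈
        (polynomialFunctions K).topologicalClosure := by rw [h1]; trivial
    exact h2
  rw [Metric.mem_closure_iff] at hdense
  obtain ⟨g, hgmem, hgdist⟩ := hdense δ hδpos
  rw [polynomialFunctions_coe] at hgmem
  obtain ⟨q, rfl⟩ := hgmem
  have hqK : ∀ t ∈ K, |h t - q.eval t| ≤ δ := by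
    intro t ht
    have hd := ContinuousMap.dist_apply_le_dist (f := (⟨h, hcont⟩ : C(ℝ, ℝ)).restrict K)
      (g := Polynomial.toContinuousMapOnAlgHom K q) ⟨t, ht⟩
    rw [Real.dist_eq] at hd
    exact le_of_lt (lt_of_le_of_lt hd hgdist)
  set q' : ℝ[X] := q - C (q.coeff 0) with hq'def
  have hq'0 : q'.coeff 0 = 0 := by simp [hq'def]
  have h0K : (0:ℝ) ∈ K := by right; rfl
  have hq0 : |q.coeff 0| ≤ δ := by
    have := hqK 0 h0K
    simpa [h0, coeff_zero_eq_eval_zero] using this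
  have hq'K : ∀ t ∈ spectrum ℝ p, |h t - q'.eval t| ≤ 2 * δ := by
    intro t ht
    have h1 := hqK t (Or.inl ht)
    have h2 : h t - q'.eval t = (h t - q.eval t) + q.coeff 0 := by
      simp [hq'def]; ring
    rw [h2]
    calc |(h t - q.eval t) + q.coeff 0| ≤ |h t - q.eval t| + |q.coeff 0| := abs_add_le _ _
      _ ≤ 2 * δ := by linarith
  refine ⟨x ∘L (aeval p q'), hpoly q' hq'0, ?_⟩
  rw [dist_eq_norm, ← cfc_polynomial q' p]
  have hsub : x ∘L cfc h p - x ∘L cfc q'.eval p = x ∘L (cfc h p - cfc q'.eval p) := by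
    rw [comp_sub]
  rw [hsub, ← cfc_sub h q'.eval p hcont.continuousOn (by fun_prop)]
  have hmain : ‖x ∘L cfc (fun t => h t - q'.eval t) p‖ ≤ ‖x‖ * (2 * δ) :=
    calc ‖x ∘L cfc (fun t => h t - q'.eval t) p‖ ≤ ‖x‖ * ‖cfc (fun t => h t - q'.eval t) p‖ :=
        opNorm_comp_le _ _
    _ ≤ ‖x‖ * (2 * δ) := by
        apply mul_le_mul_of_nonneg_left _ (norm_nonneg x)
        exact norm_cfc_le (by positivity) fun t ht => by
          rw [Real.norm_eq_abs]; exact hq'K t ht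
  have hfin : ‖x‖ * (2 * δ) < ε := by
    have h1 : δ * (2 * (‖x‖ + 1) + 1) = ε := by
      rw [hδdef]; field_simp
    nlinarith [norm_nonneg x, hδpos]
  exact lt_of_le_of_lt hmain hfin

private lemma cfc_mem' (p : E →L[ℂ] E) (hpsa : IsSelfAdjoint p)
    (Ax : Submodule ℂ (E →L[ℂ] E))
    (hAcl : IsClosed (Ax : Set (E →L[ℂ] E)))
    (hAmul : ∀ a ∈ Ax, ∀ b ∈ Ax, a ∘L b ∈ Ax)
    (hpA : p ∈ Ax)
    (h : ℝ → ℝ) (hcont : Continuous h) (h0 : h 0 = 0) :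
    cfc h p ∈ Ax := by
  have hpow : ∀ k : ℕ, p ^ (k + 1) ∈ Ax := by
    intro k
    induction k with
    | zero => simpa using hpA
    | succ k ih =>
      have := hAmul _ ih _ hpA
      rw [← mul_def, ← pow_succ] at this
      exact this
  have hpoly : ∀ q : ℝ[X], q.coeff 0 = 0 → (aeval p q) ∈ Ax := by
    intro q hq
    rw [aeval_eq_sum_range]
    apply Submodule.sum_mem
    intro i hi
    match i with
    | 0 => rw [hq, zero_smul]; exact Ax.zero_mem
    | (k + 1) => exact Ax.smul_of_tower_mem _ (hpow k)
  suffices hcl : cfc h p ∈ closure (Ax : Set (E →L[ℂ] E)) by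
    rwa [hAcl.closure_eq] at hcl
  rw [Metric.mem_closure_iff]
  intro ε hε
  have hKc : IsCompact (spectrum ℝ p ∪ {0}) :=
    (spectrum.isCompact p).union isCompact_singleton
  haveI : CompactSpace (spectrum ℝ p ∪ {0} : Set ℝ) := isCompact_iff_compactSpace.mp hKc
  set K : Set ℝ := spectrum ℝ p ∪ {0} with hKdef
  set δ : ℝ := ε / 3 with hδdef
  have hδpos : 0 < δ := by positivity
  have hdense : ((⟨h, hcont⟩ : C(ℝ, ℝ)).restrict K) ∈
      closure ((polynomialFunctions K : Set C(K, ℝ))) := by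
    have h1 := polynomialFunctions.topologicalClosure K
    have h2 : ((⟨h, hcont⟩ : C(ℝ, ℝ)).restrict K) ∈
        (polynomialFunctions K).topologicalClosure := by rw [h1]; trivial
    exact h2
  rw [Metric.mem_closure_iff] at hdense
  obtain ⟨g, hgmem, hgdist⟩ := hdense δ hδpos
  rw [polynomialFunctions_coe] at hgmem
  obtain ⟨q, rfl⟩ := hgmem
  have hqK : ∀ t ∈ K, |h t - q.eval t| ≤ δ := by
    intro t ht
    have hd := ContinuousMap.dist_apply_le_dist (f := (⟨h, hcont⟩ : C(ℝ, ℝ)).restrict K)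
      (g := Polynomial.toContinuousMapOnAlgHom K q) ⟨t, ht⟩
    rw [Real.dist_eq] at hd
    exact le_of_lt (lt_of_le_of_lt hd hgdist)
  set q' : ℝ[X] := q - C (q.coeff 0) with hq'def
  have hq'0 : q'.coeff 0 = 0 := by simp [hq'def]
  have h0K : (0:ℝ) ∈ K := by right; rfl
  have hq0 : |q.coeff 0| ≤ δ := by
    have := hqK 0 h0K
    simpa [h0, coeff_zero_eq_eval_zero] using this
  have hq'K : ∀ t ∈ spectrum ℝ p, |h t - q'.eval t| ≤ 2 * δ := by
    intro t ht
    have h1 := hqK t (Or.inl ht)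
    have h2 : h t - q'.eval t = (h t - q.eval t) + q.coeff 0 := by
      simp [hq'def]; ring
    rw [h2]
    calc |(h t - q.eval t) + q.coeff 0| ≤ |h t - q.eval t| + |q.coeff 0| := abs_add_le _ _
      _ ≤ 2 * δ := by linarith
  refine ⟨aeval p q', hpoly q' hq'0, ?_⟩
  rw [dist_eq_norm, ← cfc_polynomial q' p]
  rw [← cfc_sub h q'.eval p hcont.continuousOn (by fun_prop)]
  have hmain : ‖cfc (fun t => h t - q'.eval t) p‖ ≤ 2 * δ :=
    norm_cfc_le (by positivity) fun t ht => by
      rw [Real.norm_eq_abs]; exact hq'K t ht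
  have hfin : 2 * δ < ε := by rw [hδdef]; linarith
  exact lt_of_le_of_lt hmain hfin

private lemma factor' (x : E →L[ℂ] F) (Mx : Submodule ℂ (E →L[ℂ] F))
    (Ax : Submodule ℂ (E →L[ℂ] E))
    (hMcl : IsClosed (Mx : Set (E →L[ℂ] F)))
    (hAcl : IsClosed (Ax : Set (E →L[ℂ] E)))
    (hMA : ∀ m ∈ Mx, ∀ a ∈ Ax, m ∘L a ∈ Mx)
    (hAmul : ∀ a ∈ Ax, ∀ b ∈ Ax, a ∘L b ∈ Ax)
    (hpA : adjoint x ∘L x ∈ Ax) (hx : x ∈ Mx) :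
    ∃ y ∈ Mx, ∃ a ∈ Ax, adjoint a = a ∧ x = y ∘L a := by
  set p := adjoint x ∘L x with hpdef
  have hpsa : IsSelfAdjoint p := by
    rw [isSelfAdjoint_iff, star_eq_adjoint, hpdef, adjoint_comp, adjoint_adjoint]
  have hpos : 0 ≤ p := by
    rw [hpdef, nonneg_iff_isPositive]
    have h1 := (isPositive_one (E := F)).adjoint_conj x
    rwa [one_def, id_comp] at h1
  have hspec : ∀ t ∈ spectrum ℝ p, 0 ≤ t := fun t ht =>
    spectrum_nonneg_of_nonneg hpos ht
  -- the function g(t) = t^{1/4} (as sqrt of sqrt; zero for t ≤ 0)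
  set g : ℝ → ℝ := fun t => Real.sqrt (Real.sqrt t) with hgdef
  have hgc : Continuous g := Real.continuous_sqrt.comp Real.continuous_sqrt
  have hg0 : g 0 = 0 := by simp [hgdef]
  set a := cfc g p with hadef
  have haA : a ∈ Ax := cfc_mem' p hpsa Ax hAcl hAmul hpA g hgc hg0
  have hasa : adjoint a = a := by
    rw [← star_eq_adjoint]; exact (cfc_predicate g p).star_eq
  -- approximating sequence
  set ε : ℕ → ℝ := fun k => 1 / ((k : ℝ) + 1) with hεdef
  have hεpos : ∀ k, 0 < ε k := fun k => by positivity
  have hεle : ∀ N k, N ≤ k → ε k ≤ ε N := by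
    intro N k hNk
    apply one_div_le_one_div_of_le (by positivity)
    have : (N : ℝ) ≤ (k : ℝ) := Nat.cast_le.mpr hNk
    linarith
  set f : ℕ → ℝ → ℝ := fun k t => (g t)^3 / ((g t)^4 + ε k) with hfdef
  have hfc : ∀ k, Continuous (f k) := by
    intro k
    apply Continuous.div (hgc.pow 3) ((hgc.pow 4).add continuous_const)
    intro t
    have := hεpos k
    show g t ^ 4 + ε k ≠ 0
    exact (add_pos_of_nonneg_of_pos (by positivity) this).ne'
  have hf0 : ∀ k, f k 0 = 0 := by
    intro k; simp [hfdef, hg0]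
  set y : ℕ → (E →L[ℂ] F) := fun k => x ∘L cfc (f k) p with hydef
  have hyM : ∀ k, y k ∈ Mx := fun k =>
    comp_cfc_mem' x Mx Ax hMcl hMA hAmul hpA (f k) (hfc k) (hf0 k) hx
  -- Cauchy estimate
  have hest : ∀ j k, ‖y j - y k‖^2 ≤ Real.sqrt (max (ε j) (ε k)) := by
    intro j k
    have hdiff : y j - y k = x ∘L cfc (fun t => f j t - f k t) p := by
      rw [cfc_sub _ _ p (hfc j).continuousOn (hfc k).continuousOn, comp_sub]
    rw [hdiff]
    apply norm_comp_cfc_sq_le' x _ ((hfc j).sub (hfc k)) (Real.sqrt_nonneg _)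
    intro t ht
    have ht0 : 0 ≤ t := hspec t ht
    rcases le_total (ε j) (ε k) with hjk | hjk
    · rw [max_eq_right hjk]
      exact est2' t ht0 (ε j) (ε k) (hεpos j) hjk
    · rw [max_eq_left hjk]
      have := est2' t ht0 (ε k) (ε j) (hεpos k) hjk
      rw [show (f j - f k) t ^ 2 = (f k t - f j t)^2 by simp only [Pi.sub_apply]; ring]
      exact this
  have hb0 : Tendsto (fun N => Real.sqrt (Real.sqrt (ε N))) atTop (nhds 0) := by
    have h₁ : Tendsto ε atTop (nhds 0) := tendsto_one_div_add_atTop_nhds_zero_nat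
    have h₂ := ((Real.continuous_sqrt.comp Real.continuous_sqrt).tendsto 0).comp h₁
    simpa [Function.comp_def] using h₂
  have hcauchy : CauchySeq y := by
    apply cauchySeq_of_le_tendsto_0 (fun N => Real.sqrt (Real.sqrt (ε N))) ?_ hb0
    intro j k N hj hk
    rw [dist_eq_norm]
    apply Real.le_sqrt_of_sq_le
    calc ‖y j - y k‖^2 ≤ Real.sqrt (max (ε j) (ε k)) := hest j k
      _ ≤ Real.sqrt (ε N) := Real.sqrt_le_sqrt (max_le (hεle N j hj) (hεle N k hk))
  obtain ⟨z, hz⟩ := cauchySeq_tendsto_of_complete hcauchy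
  have hzM : z ∈ Mx := hMcl.mem_of_tendsto hz (Filter.Eventually.of_forall hyM)
  refine ⟨z, hzM, a, haA, hasa, ?_⟩
  -- x = z ∘L a
  have hcomp1 : Tendsto (fun k => y k ∘L a) atTop (nhds (z ∘L a)) := by
    have hcont1 : Continuous (fun w : E →L[ℂ] F => w ∘L a) :=
      ((compL ℂ E E F).flip a).continuous
    exact (hcont1.tendsto z).comp hz
  have hya : ∀ k, y k ∘L a = x ∘L cfc (fun t => f k t * g t) p := by
    intro k
    show (x ∘L cfc (f k) p) ∘L cfc g p = _
    rw [ContinuousLinearMap.comp_assoc, ← mul_def,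
      ← cfc_mul _ _ p (hfc k).continuousOn hgc.continuousOn]
  have hx1 : x ∘L cfc (fun _ : ℝ => (1:ℝ)) p = x := by
    rw [cfc_const_one ℝ p, one_def, comp_id]
  have hbnd : ∀ k, ‖y k ∘L a - x‖ ≤ Real.sqrt (ε k) := by
    intro k
    have hdiff : x ∘L cfc (fun t => f k t * g t - 1) p = y k ∘L a - x := by
      rw [cfc_sub _ _ p (show Continuous (fun t => f k t * g t) from (hfc k).mul hgc).continuousOn continuousOn_const,
        cfc_const_one ℝ p, comp_sub, one_def, comp_id, hya k]
    rw [← hdiff]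
    apply Real.le_sqrt_of_sq_le
    apply norm_comp_cfc_sq_le' x _ (((hfc k).mul hgc).sub continuous_const) (hεpos k).le
    intro t ht
    exact est3' t (hspec t ht) (ε k) (hεpos k)
  have hsq : Tendsto (fun k => Real.sqrt (ε k)) atTop (nhds 0) := by
    have h₁ : Tendsto ε atTop (nhds 0) := tendsto_one_div_add_atTop_nhds_zero_nat
    have h₂ := (Real.continuous_sqrt.tendsto 0).comp h₁
    simpa [Function.comp_def] using h₂
  have hnorm0 : Tendsto (fun k => ‖y k ∘L a - x‖) atTop (nhds 0) :=
    squeeze_zero (fun k => norm_nonneg _) hbnd hsq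
  have hcomp2 : Tendsto (fun k => y k ∘L a) atTop (nhds x) :=
    tendsto_iff_norm_sub_tendsto_zero.mpr hnorm0
  exact tendsto_nhds_unique hcomp2 hcomp1

end Aux

/-- Concretely realized graded Hilbert C*-module: `A : S → Submodule ℂ L(E)` is an
`S`-graded C*-algebra of operators and `M : S → Submodule ℂ L(E,F)` is an `S`-graded
Hilbert module over it, i.e. `M(σ)A(τ) ⊆ M(σ∧τ)` and `⟨M(σ),M(τ)⟩ = M(σ)*M(τ) ⊆ A(σ∧τ)`.
Then for `m ∈ M(σ)`, `n ∈ M(τ)` the "rank one" operator `m n*` can be rewritten as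
`m' n'*` with `m', n' ∈ M(σ∧τ)`; in particular it belongs to `K(M(σ∧τ))`. -/
theorem stmt12 {S : Type*} [SemilatticeInf S]
    {E F : Type*} [NormedAddCommGroup E] [InnerProductSpace ℂ E] [CompleteSpace E]
    [NormedAddCommGroup F] [InnerProductSpace ℂ F] [CompleteSpace F]
    (A : S → Submodule ℂ (E →L[ℂ] E)) (M : S → Submodule ℂ (E →L[ℂ] F))
    (hAcl : ∀ σ, IsClosed (A σ : Set (E →L[ℂ] E)))
    (hAstar : ∀ σ, ∀ a ∈ A σ, adjoint a ∈ A σ)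
    (hAmul : ∀ σ τ, ∀ a ∈ A σ, ∀ b ∈ A τ, a ∘L b ∈ A (σ ⊓ τ))
    (hMcl : ∀ σ, IsClosed (M σ : Set (E →L[ℂ] F)))
    (hMA : ∀ σ τ, ∀ m ∈ M σ, ∀ a ∈ A τ, m ∘L a ∈ M (σ ⊓ τ))
    (hMM : ∀ σ τ, ∀ m ∈ M σ, ∀ n ∈ M τ, (adjoint m) ∘L n ∈ A (σ ⊓ τ)) :
    ∀ σ τ, ∀ m ∈ M σ, ∀ n ∈ M τ, ∃ m' ∈ M (σ ⊓ τ), ∃ n' ∈ M (σ ⊓ τ),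
      m ∘L (adjoint n) = m' ∘L (adjoint n') := by
  intro σ τ m hm n hn
  -- Step 1: factor `n = n₁ ∘L a` with `n₁ ∈ M τ`, `a ∈ A τ` selfadjoint.
  obtain ⟨n₁, hn₁, a, haA, hasa, hna⟩ := factor' n (M τ) (A τ) (hMcl τ) (hAcl τ)
    (fun m' hm' a' ha' => by simpa [inf_idem] using hMA τ τ m' hm' a' ha')
    (fun a' ha' b' hb' => by simpa [inf_idem] using hAmul τ τ a' ha' b' hb')
    (by simpa [inf_idem] using hMM τ τ n hn n hn) hn
  set m₁ := m ∘L a with hm₁def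
  have hm₁ : m₁ ∈ M (σ ⊓ τ) := hMA σ τ m hm a haA
  have heq1 : m ∘L adjoint n = m₁ ∘L adjoint n₁ := by
    rw [hna, adjoint_comp, hasa, hm₁def, ← ContinuousLinearMap.comp_assoc]
  -- Step 2: factor `m₁ = m₂ ∘L b` with `m₂ ∈ M (σ ⊓ τ)`, `b ∈ A (σ ⊓ τ)` selfadjoint.
  obtain ⟨m₂, hm₂, b, hbA, hbsa, hmb⟩ := factor' m₁ (M (σ ⊓ τ)) (A (σ ⊓ τ))
    (hMcl (σ ⊓ τ)) (hAcl (σ ⊓ τ))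
    (fun m' hm' a' ha' => by simpa [inf_idem] using hMA (σ ⊓ τ) (σ ⊓ τ) m' hm' a' ha')
    (fun a' ha' b' hb' => by simpa [inf_idem] using hAmul (σ ⊓ τ) (σ ⊓ τ) a' ha' b' hb')
    (by simpa [inf_idem] using hMM (σ ⊓ τ) (σ ⊓ τ) m₁ hm₁ m₁ hm₁) hm₁
  have hinf : τ ⊓ (σ ⊓ τ) = σ ⊓ τ := by rw [inf_comm σ τ, ← inf_assoc, inf_idem]
  have hn' : n₁ ∘L b ∈ M (σ ⊓ τ) := by
    have := hMA τ (σ ⊓ τ) n₁ hn₁ b hbA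
    rwa [hinf] at this
  refine ⟨m₂, hm₂, n₁ ∘L b, hn', ?_⟩
  rw [heq1, hmb, adjoint_comp, hbsa, ← ContinuousLinearMap.comp_assoc]
end

section
/- Let S be an atomic semilattice with least element o and set of atoms P(S), and A an S-graded C*-algebra. For each atom α, let A_{≥α} = closure of Σ_{τ≥α} A(τ) and let P_{≥α} : A → A_{≥α} be the canonical projection morphism (which kills A(τ) for τ ≱ α). Then the map P(A) = (P_{≥α} A)_{α ∈ P(S)} defines a *-homomorphism P : A → Π_{α∈P(S)} A_{≥α} whose kernel is exactly A(o); hence A/A(o) embeds into Π_{α∈P(S)} A_{≥α}. -/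
/-- The closed linear span `A(T)` of the components `𝒜(σ)`, `σ ∈ T`, of a graded
C*-algebra. -/
noncomputable def gradedPart {S A : Type*} [SemilatticeInf S]
    [NormedRing A] [NormedAlgebra ℂ A] (𝒜 : S → Submodule ℂ A) (T : Set S) : Set A :=
  closure (↑(Submodule.span ℂ (⋃ σ ∈ T, (𝒜 σ : Set A))) : Set A)

set_option linter.unusedSectionVars false
set_option maxHeartbeats 1000000

open Finset in
private lemma stmt15_contract {A : Type*}
    [NormedRing A] [StarRing A] [CStarRing A] [NormedAlgebra ℂ A] [StarModule ℂ A]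
    [CompleteSpace A] (P : A →L[ℂ] A) (hm : ∀ a b : A, P (a * b) = P a * P b)
    (hs : ∀ a : A, P (star a) = star (P a)) (x : A) : ‖P x‖ ≤ ‖x‖ := by
  letI : CStarAlgebra A := ⟨⟩
  exact NonUnitalStarAlgHom.norm_apply_le
    ({ toFun := ⇑P, map_smul' := fun c y => P.map_smul c y, map_zero' := P.map_zero,
       map_add' := P.map_add, map_mul' := hm, map_star' := hs } : A →⋆ₙₐ[ℂ] A) x


open Finset in
private lemma stmt15_induction {S A : Type*} [SemilatticeInf S] [OrderBot S]
    [NormedRing A] [StarRing A] [CStarRing A] [NormedAlgebra ℂ A] [StarModule ℂ A]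
    [CompleteSpace A]
    (𝒜 : S → Submodule ℂ A) (P : S → A →L[ℂ] A)
    (hP1 : ∀ α, IsAtom α → ∀ τ, α ≤ τ → ∀ a ∈ 𝒜 τ, P α a = a)
    (hP0 : ∀ α, IsAtom α → ∀ τ, ¬ α ≤ τ → ∀ a ∈ 𝒜 τ, P α a = 0)
    (hC : ∀ α, IsAtom α → ∀ x : A, ‖P α x‖ ≤ ‖x‖) :
    ∀ t : Finset S, (∀ α ∈ t, IsAtom α) →
      ∀ (W : Finset S) (c : S → A) (δ : ℝ), 0 ≤ δ →
      (∀ τ, c τ ∈ 𝒜 τ) →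
      (∀ τ ∈ W, τ ≠ ⊥ → ∃ α ∈ t, α ≤ τ) →
      (∀ α ∈ t, ‖P α (∑ τ ∈ W, c τ)‖ ≤ δ) →
      ∃ e ∈ 𝒜 ⊥, ‖(∑ τ ∈ W, c τ) - e‖ ≤ (2 ^ t.card - 1) * δ := by
  classical
  intro t
  induction t using Finset.induction_on with
  | empty =>
    intro _ W c δ hδ hc hW _
    refine ⟨∑ τ ∈ W, c τ, ?_, by simp⟩
    refine Submodule.sum_mem _ fun τ hτ => ?_
    have htb : τ = ⊥ := by
      by_contra h
      obtain ⟨α, hα, -⟩ := hW τ hτ h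
      exact absurd hα (Finset.notMem_empty α)
    exact htb ▸ hc τ
  | @insert α s hαs ih =>
    intro hat W c δ hδ hc hW hbound
    have hatα : IsAtom α := hat α (Finset.mem_insert_self α s)
    set z := ∑ τ ∈ W, c τ with hz
    have hPz : P α z = ∑ τ ∈ W, if α ≤ τ then c τ else 0 := by
      rw [hz, map_sum]
      refine Finset.sum_congr rfl fun τ _ => ?_
      by_cases h : α ≤ τ
      · simp only [h, if_true]; exact hP1 α hatα τ h (c τ) (hc τ)
      · simp only [h, if_false]; exact hP0 α hatα τ h (c τ) (hc τ)
    set W' := W.filter (fun τ => ¬ α ≤ τ) with hW'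
    have hz' : z - P α z = ∑ τ ∈ W', c τ := by
      rw [hPz, hz, ← Finset.sum_sub_distrib, hW', Finset.sum_filter]
      refine Finset.sum_congr rfl fun τ _ => ?_
      by_cases h : α ≤ τ <;> simp [h]
    -- double application commutes
    have hcomm : ∀ β, IsAtom β → P β (P α z) = P α (P β z) := by
      intro β hβ
      have e1 : ∀ (γ : S), IsAtom γ → ∀ (y : S → A), (∀ τ, y τ ∈ 𝒜 τ) →
          P γ (∑ τ ∈ W, y τ) = ∑ τ ∈ W, if γ ≤ τ then y τ else 0 := by
        intro γ hγ y hy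
        rw [map_sum]
        refine Finset.sum_congr rfl fun τ _ => ?_
        by_cases h : γ ≤ τ
        · simp only [h, if_true]; exact hP1 γ hγ τ h (y τ) (hy τ)
        · simp only [h, if_false]; exact hP0 γ hγ τ h (y τ) (hy τ)
      have hyα : ∀ τ, (if α ≤ τ then c τ else 0) ∈ 𝒜 τ := by
        intro τ; by_cases h : α ≤ τ <;> simp [h, hc τ, Submodule.zero_mem]
      have hyβ : ∀ τ, (if β ≤ τ then c τ else 0) ∈ 𝒜 τ := by
        intro τ; by_cases h : β ≤ τ <;> simp [h, hc τ, Submodule.zero_mem]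
      have hPβz : P β z = ∑ τ ∈ W, if β ≤ τ then c τ else 0 := e1 β hβ c hc
      rw [hPz, hPβz, e1 β hβ _ hyα, e1 α hatα _ hyβ]
      refine Finset.sum_congr rfl fun τ _ => ?_
      by_cases h1 : α ≤ τ <;> by_cases h2 : β ≤ τ <;> simp [h1, h2]
    obtain ⟨e, he, hee⟩ := ih (fun β hβ => hat β (Finset.mem_insert_of_mem hβ)) W' c (2 * δ)
      (by linarith)
      hc
      (by
        intro τ hτ htb
        have hτW : τ ∈ W := Finset.mem_of_mem_filter τ hτ
        obtain ⟨β, hβ, hβle⟩ := hW τ hτW htb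
        rcases Finset.mem_insert.mp hβ with rfl | hβs
        · exact absurd hβle (Finset.mem_filter.mp hτ).2
        · exact ⟨β, hβs, hβle⟩)
      (by
        intro β hβs
        have hβ : IsAtom β := hat β (Finset.mem_insert_of_mem hβs)
        have h1 : ‖P β z‖ ≤ δ := hbound β (Finset.mem_insert_of_mem hβs)
        have h2 : ‖P β (P α z)‖ ≤ δ := by
          rw [hcomm β hβ]
          exact le_trans (hC α hatα (P β z)) h1
        calc ‖P β (∑ τ ∈ W', c τ)‖ = ‖P β z - P β (P α z)‖ := by rw [← hz', map_sub]
          _ ≤ ‖P β z‖ + ‖P β (P α z)‖ := norm_sub_le _ _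
          _ ≤ 2 * δ := by linarith)
    refine ⟨e, he, ?_⟩
    have h1 : ‖P α z‖ ≤ δ := hbound α (Finset.mem_insert_self α s)
    calc ‖z - e‖ = ‖P α z + ((∑ τ ∈ W', c τ) - e)‖ := by rw [← hz']; congr 1; abel
      _ ≤ ‖P α z‖ + ‖(∑ τ ∈ W', c τ) - e‖ := norm_add_le _ _
      _ ≤ δ + (2 ^ s.card - 1) * (2 * δ) := by linarith
      _ = (2 ^ (s.card + 1) - 1) * δ := by rw [pow_succ]; ring
      _ = (2 ^ (insert α s).card - 1) * δ := by rw [Finset.card_insert_of_notMem hαs]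


open Finset Polynomial in
private lemma stmt15_span_decomp {S A : Type*} [SemilatticeInf S]
    [NormedRing A] [NormedAlgebra ℂ A] (𝒜 : S → Submodule ℂ A)
    (x : A) (hx : x ∈ Submodule.span ℂ (⋃ σ : S, (𝒜 σ : Set A))) :
    ∃ (W : Finset S) (c : S → A), (∀ τ, c τ ∈ 𝒜 τ) ∧ x = ∑ τ ∈ W, c τ := by
  classical
  induction hx using Submodule.span_induction with
  | mem y hy =>
    obtain ⟨-, ⟨σ, rfl⟩, hyσ⟩ := hy
    exact ⟨{σ}, fun τ => if h : τ = σ then y else 0,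
      fun τ => by
        by_cases h : τ = σ
        · subst h; simpa using hyσ
        · simp [h, Submodule.zero_mem], by simp⟩
  | zero => exact ⟨∅, fun _ => 0, fun τ => Submodule.zero_mem _, by simp⟩
  | add y z _ _ hy hz =>
    obtain ⟨W1, c1, hc1, rfl⟩ := hy
    obtain ⟨W2, c2, hc2, rfl⟩ := hz
    refine ⟨W1 ∪ W2, fun τ => (if τ ∈ W1 then c1 τ else 0) + (if τ ∈ W2 then c2 τ else 0),
      fun τ => ?_, ?_⟩
    · refine Submodule.add_mem _ ?_ ?_ <;> split <;> simp_all [Submodule.zero_mem]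
    · rw [Finset.sum_add_distrib]
      congr 1
      · rw [← Finset.sum_filter, Finset.filter_mem_eq_inter, Finset.union_inter_cancel_left]
      · rw [← Finset.sum_filter, Finset.filter_mem_eq_inter, Finset.union_inter_cancel_right]
  | smul r y _ hy =>
    obtain ⟨W, c, hc, rfl⟩ := hy
    exact ⟨W, fun τ => r • c τ, fun τ => Submodule.smul_mem _ r (hc τ), by
      rw [Finset.smul_sum]⟩


open Finset Polynomial

section

variable {S A : Type*} [SemilatticeInf S] [OrderBot S]
    [NormedRing A] [StarRing A] [CStarRing A] [NormedAlgebra ℂ A] [StarModule ℂ A]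
    [CompleteSpace A] (𝒜 : S → Submodule ℂ A)

private lemma stmt15_decomp_mul
    (hmul : ∀ σ τ, ∀ a ∈ 𝒜 σ, ∀ b ∈ 𝒜 τ, a * b ∈ 𝒜 (σ ⊓ τ))
    (W : Finset S) (hW : ∀ σ ∈ W, ∀ τ ∈ W, σ ⊓ τ ∈ W) {x y : A}
    (hx : ∃ c : S → A, (∀ τ, c τ ∈ 𝒜 τ) ∧ x = ∑ τ ∈ W, c τ)
    (hy : ∃ c : S → A, (∀ τ, c τ ∈ 𝒜 τ) ∧ y = ∑ τ ∈ W, c τ) :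
    ∃ c : S → A, (∀ τ, c τ ∈ 𝒜 τ) ∧ x * y = ∑ τ ∈ W, c τ := by
  classical
  obtain ⟨c, hc, rfl⟩ := hx
  obtain ⟨d, hd, rfl⟩ := hy
  refine ⟨fun ρ => ∑ p ∈ (W ×ˢ W).filter (fun p => p.1 ⊓ p.2 = ρ), c p.1 * d p.2,
    fun ρ => ?_, ?_⟩
  · refine Submodule.sum_mem _ fun p hp => ?_
    have h := (Finset.mem_filter.mp hp).2
    exact h ▸ hmul p.1 p.2 (c p.1) (hc p.1) (d p.2) (hd p.2)
  · rw [Finset.sum_mul_sum, ← Finset.sum_product']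
    exact (Finset.sum_fiberwise_of_maps_to
      (fun p hp => hW p.1 (Finset.mem_product.mp hp).1 p.2 (Finset.mem_product.mp hp).2) _).symm

private lemma stmt15_decomp_pow
    (hmul : ∀ σ τ, ∀ a ∈ 𝒜 σ, ∀ b ∈ 𝒜 τ, a * b ∈ 𝒜 (σ ⊓ τ))
    (W : Finset S) (hW : ∀ σ ∈ W, ∀ τ ∈ W, σ ⊓ τ ∈ W) {x : A}
    (hx : ∃ c : S → A, (∀ τ, c τ ∈ 𝒜 τ) ∧ x = ∑ τ ∈ W, c τ) (i : ℕ) :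
    ∃ c : S → A, (∀ τ, c τ ∈ 𝒜 τ) ∧ x ^ (i + 1) = ∑ τ ∈ W, c τ := by
  induction i with
  | zero => simpa using hx
  | succ n ihn =>
    have := stmt15_decomp_mul 𝒜 hmul W hW ihn hx
    rwa [← pow_succ] at this

private lemma stmt15_decomp_sum {ι : Type*} (W : Finset S) (s : Finset ι) (f : ι → A) :
    (∀ i ∈ s, ∃ c : S → A, (∀ τ, c τ ∈ 𝒜 τ) ∧ f i = ∑ τ ∈ W, c τ) →
    ∃ c : S → A, (∀ τ, c τ ∈ 𝒜 τ) ∧ ∑ i ∈ s, f i = ∑ τ ∈ W, c τ := by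
  classical
  induction s using Finset.induction_on with
  | empty => intro _; exact ⟨fun _ => 0, fun τ => Submodule.zero_mem _, by simp⟩
  | @insert j s hjs ih =>
    intro h
    obtain ⟨c1, hc1, h1⟩ := h j (Finset.mem_insert_self j s)
    obtain ⟨c2, hc2, h2⟩ := ih (fun i hi => h i (Finset.mem_insert_of_mem hi))
    exact ⟨fun τ => c1 τ + c2 τ, fun τ => Submodule.add_mem _ (hc1 τ) (hc2 τ), by
      rw [Finset.sum_insert hjs, h1, h2, Finset.sum_add_distrib]⟩

private lemma stmt15_decomp_aeval
    (hmul : ∀ σ τ, ∀ a ∈ 𝒜 σ, ∀ b ∈ 𝒜 τ, a * b ∈ 𝒜 (σ ⊓ τ))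
    (W : Finset S) (hW : ∀ σ ∈ W, ∀ τ ∈ W, σ ⊓ τ ∈ W) {x : A}
    (hx : ∃ c : S → A, (∀ τ, c τ ∈ 𝒜 τ) ∧ x = ∑ τ ∈ W, c τ)
    (q : ℝ[X]) (hq : q.coeff 0 = 0) :
    ∃ c : S → A, (∀ τ, c τ ∈ 𝒜 τ) ∧ aeval x q = ∑ τ ∈ W, c τ := by
  classical
  rw [aeval_eq_sum_range]
  have key : ∀ i ∈ Finset.range (q.natDegree + 1),
      ∃ c : S → A, (∀ τ, c τ ∈ 𝒜 τ) ∧ q.coeff i • x ^ i = ∑ τ ∈ W, c τ := by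
    intro i _
    rcases Nat.eq_zero_or_pos i with rfl | hi
    · exact ⟨fun _ => 0, fun τ => Submodule.zero_mem _, by simp [hq]⟩
    · obtain ⟨c, hc, hcx⟩ := stmt15_decomp_pow 𝒜 hmul W hW hx (i - 1)
      rw [Nat.sub_add_cancel hi] at hcx
      refine ⟨fun τ => q.coeff i • c τ, fun τ => ?_, by rw [hcx, Finset.smul_sum]⟩
      show q.coeff i • c τ ∈ 𝒜 τ
      rw [← Complex.coe_smul]
      exact Submodule.smul_mem _ _ (hc τ)
  exact stmt15_decomp_sum 𝒜 W _ _ key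

private lemma stmt15_P_aeval (P : A →L[ℂ] A)
    (hm : ∀ a b : A, P (a * b) = P a * P b) (x : A)
    (q : ℝ[X]) (hq : q.coeff 0 = 0) :
    P (aeval x q) = aeval (P x) q := by
  have hsm : ∀ (r : ℝ) (y : A), P (r • y) = r • P y := by
    intro r y
    rw [← Complex.coe_smul, map_smul, Complex.coe_smul]
  have hpow : ∀ i : ℕ, P (x ^ (i + 1)) = (P x) ^ (i + 1) := by
    intro i
    induction i with
    | zero => simp
    | succ n ihn => rw [pow_succ, hm, ihn, ← pow_succ]
  rw [aeval_eq_sum_range, aeval_eq_sum_range, map_sum]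
  refine Finset.sum_congr rfl fun i _ => ?_
  rw [hsm]
  rcases Nat.eq_zero_or_pos i with rfl | hi
  · simp [hq]
  · congr 1
    have := hpow (i - 1)
    rwa [Nat.sub_add_cancel hi] at this

end

section Stmt15Aux

variable {S A : Type*} [SemilatticeInf S] [OrderBot S]
    [NormedRing A] [StarRing A] [CStarRing A] [NormedAlgebra ℂ A] [StarModule ℂ A]
    [CompleteSpace A]
    (𝒜 : S → Submodule ℂ A)
    (hcl : ∀ σ, IsClosed (𝒜 σ : Set A))
    (hstar : ∀ σ, ∀ a ∈ 𝒜 σ, star a ∈ 𝒜 σ)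
    (hmul : ∀ σ τ, ∀ a ∈ 𝒜 σ, ∀ b ∈ 𝒜 τ, a * b ∈ 𝒜 (σ ⊓ τ))
    (hdense : gradedPart 𝒜 (Set.univ : Set S) = Set.univ)
    (hatomic : ∀ σ : S, σ ≠ ⊥ → ∃ α : S, IsAtom α ∧ α ≤ σ)
    (P : S → A →L[ℂ] A)
    (hP1 : ∀ α, IsAtom α → ∀ τ, α ≤ τ → ∀ a ∈ 𝒜 τ, P α a = a)
    (hP0 : ∀ α, IsAtom α → ∀ τ, ¬ α ≤ τ → ∀ a ∈ 𝒜 τ, P α a = 0)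
    (hPmul : ∀ α, IsAtom α → ∀ a b : A, P α (a * b) = P α a * P α b)
    (hPstar : ∀ α, IsAtom α → ∀ a : A, P α (star a) = star (P α a))

include hcl hstar hmul hdense hatomic hP1 hP0 hPmul hPstar in
private theorem stmt15_key : ∀ b : A, IsSelfAdjoint b → (∀ α, IsAtom α → P α b = 0) → b ∈ 𝒜 ⊥ := by
  classical
  intro b hbsa hb0
  rcases subsingleton_or_nontrivial A with hA | hA
  · rw [Subsingleton.elim b 0]; exact (𝒜 ⊥).zero_mem
  letI : CStarAlgebra A := ⟨⟩
  have hC : ∀ α, IsAtom α → ∀ x : A, ‖P α x‖ ≤ ‖x‖ := fun α hα =>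
    stmt15_contract (P α) (hPmul α hα) (hPstar α hα)
  have hmem : b ∈ closure (𝒜 ⊥ : Set A) := by
    rw [Metric.mem_closure_iff]
    intro ε' hε'
    set ε := ε' / 6 with hεdef
    have hε : 0 < ε := by positivity
    clear_value ε
    -- density approximation
    have hb : b ∈ gradedPart 𝒜 (Set.univ : Set S) := by rw [hdense]; trivial
    rw [gradedPart, Metric.mem_closure_iff] at hb
    obtain ⟨x, hx, hbx⟩ := hb ε hε
    rw [dist_eq_norm] at hbx
    rw [Set.biUnion_univ] at hx
    obtain ⟨W0, c0, hc0, hxs⟩ := stmt15_span_decomp 𝒜 x hx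
    -- selfadjoint approximation d
    set c1 : S → A := fun τ => (2:ℂ)⁻¹ • (c0 τ + star (c0 τ)) with hc1def
    have hc1 : ∀ τ, c1 τ ∈ 𝒜 τ := fun τ =>
      Submodule.smul_mem _ _ (Submodule.add_mem _ (hc0 τ) (hstar τ (c0 τ) (hc0 τ)))
    set d : A := ∑ τ ∈ W0, c1 τ with hddef
    have hd_eq : d = (2:ℂ)⁻¹ • (x + star x) := by
      rw [hddef, hc1def, ← Finset.smul_sum, Finset.sum_add_distrib, ← star_sum, hxs]
    have hconj2 : star ((2:ℂ)⁻¹) = (2:ℂ)⁻¹ := by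
      rw [Complex.star_def, map_inv₀, map_ofNat]
    have hdsa : IsSelfAdjoint d := by
      rw [IsSelfAdjoint, hd_eq, star_smul, star_add, star_star, hconj2, add_comm]
    have hbd : ‖b - d‖ ≤ ε := by
      have hbd1 : b - d = (2:ℂ)⁻¹ • ((b - x) + star (b - x)) := by
        rw [hd_eq, star_sub, hbsa.star_eq]
        module
      rw [hbd1, norm_smul]
      have h2 : ‖((2:ℂ)⁻¹)‖ = 2⁻¹ := by simp
      rw [h2]
      have h3 : ‖(b - x) + star (b - x)‖ ≤ ‖b - x‖ + ‖b - x‖ := by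
        calc ‖(b - x) + star (b - x)‖ ≤ ‖b - x‖ + ‖star (b - x)‖ := norm_add_le _ _
          _ = ‖b - x‖ + ‖b - x‖ := by rw [norm_star]
      linarith
    -- meet-closure of W0
    set 𝒲 : Finset S := (W0.powerset.filter Finset.Nonempty).attach.image
        (fun s => s.1.inf' (Finset.mem_filter.mp s.2).2 id) with h𝒲
    have hW0 : W0 ⊆ 𝒲 := by
      intro τ hτ
      apply Finset.mem_image.mpr
      refine ⟨⟨{τ}, ?_⟩, Finset.mem_attach _ _, by simp⟩
      rw [Finset.mem_filter]
      exact ⟨Finset.mem_powerset.mpr (Finset.singleton_subset_iff.mpr hτ),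
        Finset.singleton_nonempty τ⟩
    have hWmeet : ∀ σ ∈ 𝒲, ∀ τ ∈ 𝒲, σ ⊓ τ ∈ 𝒲 := by
      intro σ hσ τ hτ
      obtain ⟨s1, -, rfl⟩ := Finset.mem_image.mp hσ
      obtain ⟨s2, -, rfl⟩ := Finset.mem_image.mp hτ
      have h1 := Finset.mem_filter.mp s1.2
      have h2 := Finset.mem_filter.mp s2.2
      apply Finset.mem_image.mpr
      refine ⟨⟨s1.1 ∪ s2.1, ?_⟩, Finset.mem_attach _ _, ?_⟩
      · rw [Finset.mem_filter]
        exact ⟨Finset.mem_powerset.mpr (Finset.union_subset (Finset.mem_powerset.mp h1.1)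
          (Finset.mem_powerset.mp h2.1)), h1.2.mono Finset.subset_union_left⟩
      · exact Finset.inf'_union h1.2 h2.2 id
    -- decomposition of d over 𝒲
    set c2 : S → A := fun τ => if τ ∈ W0 then c1 τ else 0 with hc2def
    have hc2 : ∀ τ, c2 τ ∈ 𝒜 τ := by
      intro τ
      rw [hc2def]
      by_cases h : τ ∈ W0 <;> simp [h, hc1 τ, Submodule.zero_mem]
    have hd𝒲 : d = ∑ τ ∈ 𝒲, c2 τ := by
      rw [hddef]
      rw [show ∑ τ ∈ W0, c1 τ = ∑ τ ∈ W0, c2 τ from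
        Finset.sum_congr rfl fun τ hτ => by simp [hc2def, hτ]]
      exact Finset.sum_subset hW0 (fun τ _ hτ => by simp [hc2def, hτ])
    -- atoms below each nonbot element of 𝒲
    have hgex : ∀ τ : S, ∃ α : S, τ ≠ ⊥ → IsAtom α ∧ α ≤ τ := by
      intro τ
      by_cases h : τ = ⊥
      · exact ⟨⊥, fun h' => absurd h h'⟩
      · obtain ⟨α, hα⟩ := hatomic τ h; exact ⟨α, fun _ => hα⟩
    choose g hgspec using hgex
    set t : Finset S := (𝒲.filter (· ≠ ⊥)).image g with htdef
    have hatoms : ∀ α ∈ t, IsAtom α := by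
      intro α hα
      obtain ⟨τ, hτ, rfl⟩ := Finset.mem_image.mp hα
      exact (hgspec τ (Finset.mem_filter.mp hτ).2).1
    have hcover : ∀ τ ∈ 𝒲, τ ≠ ⊥ → ∃ α ∈ t, α ≤ τ := by
      intro τ hτ hτb
      exact ⟨g τ, Finset.mem_image_of_mem g (Finset.mem_filter.mpr ⟨hτ, hτb⟩),
        (hgspec τ hτb).2⟩
    set n := t.card with hndef
    set δ : ℝ := ε / 2 ^ n with hδdef
    have hδ : 0 < δ := by rw [hδdef]; exact div_pos hε (by positivity)
    clear_value δ
    have hδε : δ ≤ ε := by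
      rw [hδdef]
      apply div_le_self hε.le
      exact one_le_pow₀ (by norm_num)
    -- the polynomial
    set M : ℝ := ‖d‖ + ε with hMdef
    have hM0 : 0 < M := by rw [hMdef]; linarith [norm_nonneg d]
    clear_value M
    have hMd : ‖d‖ ≤ M := by rw [hMdef]; linarith
    have hMε : ε ≤ M := by rw [hMdef]; linarith [norm_nonneg d]
    set f : ℝ → ℝ := fun r => r - max (min r (2*ε)) (-(2*ε)) with hfdef
    have hfc : ContinuousOn f (Set.Icc (-M) M) := by fun_prop
    have hf0 : f 0 = 0 := by
      rw [hfdef]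
      simp only
      rw [min_eq_left (by positivity), max_eq_left (by linarith), sub_self]
    have hfsmall : ∀ r : ℝ, |r| ≤ 2*ε → f r = 0 := by
      intro r hr
      obtain ⟨hr1, hr2⟩ := abs_le.mp hr
      rw [hfdef]
      simp only
      rw [min_eq_left hr2, max_eq_left hr1, sub_self]
    have hfclose : ∀ r : ℝ, |r - f r| ≤ 2*ε := by
      intro r
      rw [hfdef]
      simp only [sub_sub_cancel]
      rw [abs_le]
      constructor
      · exact le_max_right _ _
      · exact max_le (min_le_right _ _) (by linarith)
    clear_value f
    obtain ⟨q0, hq0⟩ := exists_polynomial_near_of_continuousOn (-M) M f hfc (δ/2)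
      (by linarith)
    set q : Polynomial ℝ := q0 - Polynomial.C (q0.eval 0) with hqdef
    have hqc : q.coeff 0 = 0 := by
      rw [hqdef, Polynomial.coeff_sub, Polynomial.coeff_C_zero,
        Polynomial.coeff_zero_eq_eval_zero, sub_self]
    have h0mem : (0:ℝ) ∈ Set.Icc (-M) M := by
      constructor <;> linarith
    have hq : ∀ r ∈ Set.Icc (-M) M, |q.eval r - f r| ≤ δ := by
      intro r hr
      have h1 := hq0 r hr
      have h2 := hq0 0 h0mem
      rw [hf0, sub_zero] at h2
      have h3 : q.eval r = q0.eval r - q0.eval 0 := by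
        rw [hqdef, Polynomial.eval_sub, Polynomial.eval_C]
      rw [h3]
      obtain ⟨h4, h5⟩ := abs_lt.mp h1
      obtain ⟨h6, h7⟩ := abs_lt.mp h2
      rw [abs_le]
      constructor <;> linarith
    -- the element z
    set z : A := Polynomial.aeval d q with hzdef
    obtain ⟨cz, hcz, hzsum⟩ := stmt15_decomp_aeval 𝒜 hmul 𝒲 hWmeet ⟨c2, hc2, hd𝒲⟩ q hqc
    have hzsum' : z = ∑ τ ∈ 𝒲, cz τ := by rw [hzdef]; exact hzsum
    clear_value z
    -- spectra bounds
    have hPd : ∀ α, IsAtom α → ‖P α d‖ ≤ ε := by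
      intro α hα
      have h1 : P α d = P α (d - b) := by rw [map_sub, hb0 α hα, sub_zero]
      rw [h1]
      calc ‖P α (d - b)‖ ≤ ‖d - b‖ := hC α hα _
        _ ≤ ε := by rw [norm_sub_rev]; exact hbd
    have hPz : ∀ α, IsAtom α → ‖P α z‖ ≤ δ := by
      intro α hα
      rw [hzdef, stmt15_P_aeval (P α) (hPmul α hα) d q hqc]
      have hsa : IsSelfAdjoint (P α d) := by
        rw [IsSelfAdjoint, ← hPstar α hα, hdsa.star_eq]
      rw [← cfc_polynomial q (P α d) hsa]
      apply norm_cfc_le hδ.le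
      intro r hr
      have h1 : r ∈ Metric.closedBall (0:ℝ) ‖P α d‖ :=
        spectrum.subset_closedBall_norm _ hr
      rw [Metric.mem_closedBall, dist_zero_right, Real.norm_eq_abs] at h1
      have hrε : |r| ≤ ε := le_trans h1 (hPd α hα)
      have hfr : f r = 0 := hfsmall r (by linarith)
      have hrI : r ∈ Set.Icc (-M) M := by
        obtain ⟨h2, h3⟩ := abs_le.mp hrε
        constructor <;> linarith
      have h4 := hq r hrI
      rw [hfr, sub_zero] at h4
      simpa using h4
    have hdz : ‖d - z‖ ≤ 2*ε + δ := by
      have h1 : d - z = Polynomial.aeval d (Polynomial.X - q) := by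
        rw [map_sub, Polynomial.aeval_X, ← hzdef]
      rw [h1, ← cfc_polynomial (Polynomial.X - q) d hdsa]
      apply norm_cfc_le (by positivity)
      intro r hr
      have h2 : r ∈ Metric.closedBall (0:ℝ) ‖d‖ :=
        spectrum.subset_closedBall_norm _ hr
      rw [Metric.mem_closedBall, dist_zero_right, Real.norm_eq_abs] at h2
      have hrI : r ∈ Set.Icc (-M) M := by
        obtain ⟨h3, h4⟩ := abs_le.mp h2
        constructor <;> linarith
      have h5 := hq r hrI
      have h6 := hfclose r
      rw [Polynomial.eval_sub, Polynomial.eval_X, Real.norm_eq_abs]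
      obtain ⟨h7, h8⟩ := abs_le.mp h5
      obtain ⟨h9, h10⟩ := abs_le.mp h6
      rw [abs_le]
      constructor <;> linarith
    -- apply the induction lemma
    obtain ⟨e, he, hee⟩ := stmt15_induction 𝒜 P hP1 hP0 hC t hatoms 𝒲 cz δ hδ.le hcz hcover
      (fun α hα => by rw [← hzsum']; exact hPz α (hatoms α hα))
    refine ⟨e, he, ?_⟩
    rw [dist_eq_norm]
    have hze : ‖z - e‖ ≤ ε := by
      have h1 : ((2:ℝ) ^ n - 1) * δ ≤ ε := by
        have h2 : (2:ℝ) ^ n * δ = ε := by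
          rw [hδdef]
          field_simp
        nlinarith [hδ.le]
      calc ‖z - e‖ = ‖(∑ τ ∈ 𝒲, cz τ) - e‖ := by rw [hzsum']
        _ ≤ ((2:ℝ) ^ t.card - 1) * δ := hee
        _ ≤ ε := by rw [← hndef] at *; exact h1
    calc ‖b - e‖ = ‖(b - d) + ((d - z) + (z - e))‖ := by congr 1; abel
      _ ≤ ‖b - d‖ + ‖(d - z) + (z - e)‖ := norm_add_le _ _
      _ ≤ ‖b - d‖ + (‖d - z‖ + ‖z - e‖) := by linarith [norm_add_le (d - z) (z - e)]
      _ ≤ ε + ((2*ε + δ) + ε) := by linarith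
      _ < ε' := by
          have h6 : 6 * ε = ε' := by rw [hεdef]; ring
          linarith
  have h2 := (hcl ⊥).closure_eq ▸ hmem
  exact h2

end Stmt15Aux

/-- Let `S` be an atomic semilattice with least element `o = ⊥` and `A` an `S`-graded
C*-algebra. For each atom `α` let `P_{≥α}` be the canonical projection morphism onto
`A_{≥α}` (it is the identity on `A(τ)` for `τ ≥ α` and kills `A(τ)` for `τ ≱ α`).
Then `a ↦ (P_{≥α} a)_{α atom}` is a *-homomorphism into `Π_α A_{≥α}` whose kernel is
exactly `A(o)`; hence `A/A(o)` embeds into the product. -/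
theorem stmt15 {S A : Type*} [SemilatticeInf S] [OrderBot S]
    [NormedRing A] [StarRing A] [CStarRing A] [NormedAlgebra ℂ A] [StarModule ℂ A]
    [CompleteSpace A]
    (𝒜 : S → Submodule ℂ A)
    (hcl : ∀ σ, IsClosed (𝒜 σ : Set A))
    (hstar : ∀ σ, ∀ a ∈ 𝒜 σ, star a ∈ 𝒜 σ)
    (hmul : ∀ σ τ, ∀ a ∈ 𝒜 σ, ∀ b ∈ 𝒜 τ, a * b ∈ 𝒜 (σ ⊓ τ))
    (hind : ∀ t : Finset S, ∀ f : S → A,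
      (∀ σ ∈ t, f σ ∈ 𝒜 σ) → (∑ σ ∈ t, f σ) = 0 → ∀ σ ∈ t, f σ = 0)
    (hdense : gradedPart 𝒜 (Set.univ : Set S) = Set.univ)
    (hatomic : ∀ σ : S, σ ≠ ⊥ → ∃ α : S, IsAtom α ∧ α ≤ σ)
    (P : S → A →L[ℂ] A)
    (hPrange : ∀ α, IsAtom α → ∀ a : A, P α a ∈ gradedPart 𝒜 {τ | α ≤ τ})
    (hP1 : ∀ α, IsAtom α → ∀ τ, α ≤ τ → ∀ a ∈ 𝒜 τ, P α a = a)
    (hP0 : ∀ α, IsAtom α → ∀ τ, ¬ α ≤ τ → ∀ a ∈ 𝒜 τ, P α a = 0)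
    (hPmul : ∀ α, IsAtom α → ∀ a b : A, P α (a * b) = P α a * P α b)
    (hPstar : ∀ α, IsAtom α → ∀ a : A, P α (star a) = star (P α a)) :
    ∀ a : A, (∀ α, IsAtom α → P α a = 0) ↔ a ∈ 𝒜 ⊥ := by
  have key := stmt15_key 𝒜 hcl hstar hmul hdense hatomic P hP1 hP0 hPmul hPstar
  intro a
  constructor
  · intro ha
    have hre : (2:ℂ)⁻¹ • (a + star a) ∈ 𝒜 ⊥ := by
      apply key
      · rw [IsSelfAdjoint, star_smul, star_add, star_star]
        rw [show star ((2:ℂ)⁻¹) = (2:ℂ)⁻¹ by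
          rw [Complex.star_def, map_inv₀, map_ofNat], add_comm]
      · intro α hα
        rw [map_smul, map_add, ha α hα, hPstar α hα, ha α hα, star_zero, add_zero, smul_zero]
    have him : ((2:ℂ) * Complex.I)⁻¹ • (a - star a) ∈ 𝒜 ⊥ := by
      apply key
      · have hconj : star (((2:ℂ) * Complex.I)⁻¹) = -((2:ℂ) * Complex.I)⁻¹ := by
          rw [Complex.star_def, map_inv₀, map_mul, Complex.conj_I, map_ofNat]
          rw [mul_neg, neg_inv]
        rw [IsSelfAdjoint, star_smul, star_sub, star_star, hconj, neg_smul, ← smul_neg,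
          neg_sub]
      · intro α hα
        rw [map_smul, map_sub, ha α hα, hPstar α hα, ha α hα, star_zero, sub_zero, smul_zero]
    have hdec : a = (2:ℂ)⁻¹ • (a + star a)
        + Complex.I • (((2:ℂ) * Complex.I)⁻¹ • (a - star a)) := by
      rw [smul_smul]
      rw [show Complex.I * ((2:ℂ) * Complex.I)⁻¹ = (2:ℂ)⁻¹ by
        field_simp]
      module
    rw [hdec]
    exact Submodule.add_mem _ hre (Submodule.smul_mem _ _ him)
  · intro ha α hα
    have hb : ¬ α ≤ (⊥ : S) := fun h => hα.1 (le_bot_iff.mp h)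
    exact hP0 α hα ⊥ hb a ha
end

section
/- Let E ⊆ G and F ⊆ G be Hilbert spaces continuously and injectively embedded in a Hilbert space G, and let H be another Hilbert space. Equip E ∩ F with the norm (‖g‖_E² + ‖g‖_F²)^{1/2}. Then every compact operator R : E ∩ F → H can be written as R = S|_{E∩F} + T|_{E∩F} with S : E → H and T : F → H compact. In particular K(E ∩ F, H) = K(E,H)|_{E∩F} + K(F,H)|_{E∩F}. -/
/-- Let `E, F` be Hilbert spaces continuously and injectively embedded in a Hilbert space
`G` (via `iE, iF`), and `H` another Hilbert space. Realize `E ∩ F` with the norm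
`(‖g‖_E² + ‖g‖_F²)^{1/2}` as the closed "diagonal" subspace
`I = {(e,f) : iE e = iF f}` of the Hilbertian direct sum `E ⊕₂ F`. Then every compact
operator `R : E ∩ F → H` can be written as `R = S|_{E∩F} + T|_{E∩F}` with `S : E → H`
and `T : F → H` compact. -/
theorem stmt18 {E F G H : Type*}
    [NormedAddCommGroup E] [InnerProductSpace ℂ E] [CompleteSpace E]
    [NormedAddCommGroup F] [InnerProductSpace ℂ F] [CompleteSpace F]
    [NormedAddCommGroup G] [InnerProductSpace ℂ G] [CompleteSpace G]
    [NormedAddCommGroup H] [InnerProductSpace ℂ H] [CompleteSpace H]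
    (iE : E →L[ℂ] G) (iF : F →L[ℂ] G)
    (hiE : Function.Injective iE) (hiF : Function.Injective iF)
    (I : Submodule ℂ (WithLp 2 (E × F)))
    (hI : ∀ p : WithLp 2 (E × F),
      p ∈ I ↔ iE ((WithLp.equiv 2 (E × F) p).1) = iF ((WithLp.equiv 2 (E × F) p).2)) :
    ∀ R : I →L[ℂ] H, IsCompactOperator R →
      ∃ S : E →L[ℂ] H, ∃ T : F →L[ℂ] H, IsCompactOperator S ∧ IsCompactOperator T ∧
        ∀ g : I, R g = S ((WithLp.equiv 2 (E × F) (g : WithLp 2 (E × F))).1) +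
          T ((WithLp.equiv 2 (E × F) (g : WithLp 2 (E × F))).2) := by
  intro R hR
  -- I is closed: it is the kernel of a continuous linear map
  have hIc : IsClosed (I : Set (WithLp 2 (E × F))) := by
    have : (I : Set (WithLp 2 (E × F))) =
        ((iE.comp ((ContinuousLinearMap.fst ℂ E F).comp
            (WithLp.prodContinuousLinearEquiv 2 ℂ E F : WithLp 2 (E × F) →L[ℂ] (E × F)))
          - iF.comp ((ContinuousLinearMap.snd ℂ E F).comp
            (WithLp.prodContinuousLinearEquiv 2 ℂ E F : WithLp 2 (E × F) →L[ℂ] (E × F))))) ⁻¹'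
          ({0} : Set G) := by
      ext p
      simp only [Set.mem_preimage, Set.mem_singleton_iff, ContinuousLinearMap.sub_apply,
        ContinuousLinearMap.comp_apply, SetLike.mem_coe]
      rw [hI p, sub_eq_zero]
      rfl
    rw [this]
    exact isClosed_singleton.preimage (ContinuousLinearMap.continuous _)
  haveI : CompleteSpace I := hIc.completeSpace_coe
  -- orthogonal projection onto I
  let P : WithLp 2 (E × F) →L[ℂ] I := I.orthogonalProjectionOnto
  -- embeddings of E and F into WithLp 2 (E × F)
  let jE : E →L[ℂ] WithLp 2 (E × F) :=
    ((WithLp.prodContinuousLinearEquiv 2 ℂ E F).symm :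
      (E × F) →L[ℂ] (WithLp 2 (E × F))).comp (ContinuousLinearMap.inl ℂ E F)
  let jF : F →L[ℂ] WithLp 2 (E × F) :=
    ((WithLp.prodContinuousLinearEquiv 2 ℂ E F).symm :
      (E × F) →L[ℂ] (WithLp 2 (E × F))).comp (ContinuousLinearMap.inr ℂ E F)
  refine ⟨(R.comp P).comp jE, (R.comp P).comp jF, ?_, ?_, ?_⟩
  · exact (hR.comp_clm P).comp_clm jE
  · exact (hR.comp_clm P).comp_clm jF
  · intro g
    have hsum : jE ((WithLp.equiv 2 (E × F) (g : WithLp 2 (E × F))).1) +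
        jF ((WithLp.equiv 2 (E × F) (g : WithLp 2 (E × F))).2) = (g : WithLp 2 (E × F)) := by
      apply (WithLp.prodContinuousLinearEquiv 2 ℂ E F).injective
      simp [jE, jF, Prod.ext_iff]
    have hPg : P (g : WithLp 2 (E × F)) = g :=
      Submodule.orthogonalProjectionOnto_mem_subspace_eq_self g
    calc R g = R (P (g : WithLp 2 (E × F))) := by rw [hPg]
      _ = R (P (jE ((WithLp.equiv 2 (E × F) (g : WithLp 2 (E × F))).1) +
            jF ((WithLp.equiv 2 (E × F) (g : WithLp 2 (E × F))).2))) := by rw [hsum]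
      _ = _ := by simp [map_add]
end
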